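/- arXiv:2307.09295 — 12 statements merged into one kernel-verified Lean document; each statement's English description precedes it below -/
import Mathlib

section
/- Let p ∈ (0,1) and let r ≥ 2 and 1 ≤ i ≤ r−1 be integers. For every vector (x_1,…,x_r) of nonnegative reals with Σ_{j=1}^r x_j = 1 and x_{j+1} ≤ p·x_j for all j ∈ {1,…,r−1}, one has Σ_{j=1}^i x_j − i·x_{i+1} ≥ (i·p^{i+1} − (i+1)·p^i + 1)/(1 − p^r); moreover, equality holds if and only if x_j = (1−p)·p^{j−1}/(1−p^r) for all j ∈ {1,…,r}. -/
/-!
Put `t = x (i + 1)`. Following the chain `x (j + 1) ≤ p * x j` from `j` to `i + 1` and from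
`i + 1` to `j` gives `t * p ^ (j - 1) ≤ p ^ i * x j` for `j ≤ i` and `x j ≤ t * p ^ (j - i - 1)`
for `j > i`. Using only `∑ x j = 1`, the gap `(∑_{j ≤ i} x j - i * t) * (1 - p ^ r) - N`, with `N`
the numerator of the bound, is a combination with the positive weights `1 + i (1 - p) - p ^ (r - i)`
and `N` of the total slacks of these two families of comparisons (a linear-programming duality
certificate). So the gap is nonnegative, and it vanishes iff every comparison is tight, i.e. iff
`x j` is proportional to `p ^ (j - 1)`, which the normalisation pins down.
-/

open Finset

theorem one_sub_mul_sum_Icc_pow (p : ℝ) (m n : ℕ) :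
    (1 - p) * ∑ j ∈ Icc (m + 1) n, p ^ (j - (m + 1)) = 1 - p ^ (n - m) := by
  rw [← Ico_add_one_right_eq_Icc, sum_Ico_eq_sum_range]
  simpa [Nat.add_sub_add_right] using mul_neg_geom_sum p (n - m)

theorem sum_Icc_one_add_sum_Icc_succ (f : ℕ → ℝ) {i r : ℕ} (hir : i ≤ r) :
    ∑ j ∈ Icc 1 i, f j + ∑ j ∈ Icc (i + 1) r, f j = ∑ j ∈ Icc 1 r, f j := by
  simpa only [← Icc_add_one_left_eq_Ioc, zero_add] using
    sum_Ioc_consecutive f (Nat.zero_le i) hir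

theorem mul_pow_succ_sub_succ_mul_pow_add_one_pos {p : ℝ} (hp0 : 0 < p) (hp1 : p < 1) {n : ℕ}
    (hn : 1 ≤ n) : 0 < n * p ^ (n + 1) - (n + 1) * p ^ n + 1 := by
  have hM : 0 < ∑ k ∈ range n, (p ^ k - p ^ n) :=
    sum_pos (fun k hk ↦ sub_pos.2 (pow_lt_pow_right_of_lt_one₀ hp0 hp1 (mem_range.1 hk)))
      (nonempty_range_iff.2 (by omega))
  rw [sum_sub_distrib, sum_const, card_range, nsmul_eq_mul] at hM
  have hN : n * p ^ (n + 1) - (n + 1) * p ^ n + 1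
      = (1 - p) * (∑ k ∈ range n, p ^ k - n * p ^ n) := by
    linear_combination -mul_neg_geom_sum p n
  rw [hN]
  exact mul_pos (sub_pos.2 hp1) hM

theorem exists_eq_mul_pow_iff {p : ℝ} {x : ℕ → ℝ} {r : ℕ} (hr : p ^ r ≠ 1)
    (hsum : ∑ j ∈ Icc 1 r, x j = 1) :
    (∃ c, ∀ j ∈ Icc 1 r, x j = c * p ^ (j - 1)) ↔
      ∀ j ∈ Icc 1 r, x j = (1 - p) * p ^ (j - 1) / (1 - p ^ r) := by
  refine ⟨fun ⟨c, hc⟩ ↦ ?_, fun h ↦ ⟨(1 - p) / (1 - p ^ r), fun j hj ↦ by rw [h j hj]; ring⟩⟩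
  have hG := one_sub_mul_sum_Icc_pow p 0 r
  simp only [zero_add, Nat.sub_zero] at hG
  rw [sum_congr rfl hc, ← mul_sum] at hsum
  have hc' : c = (1 - p) / (1 - p ^ r) := by
    rw [eq_div_iff (sub_ne_zero.2 hr.symm)]
    linear_combination (1 - p) * hsum - c * hG
  intro j hj
  rw [hc j hj, hc']
  ring

theorem le_pow_sub_mul_of_succ_le_mul {p : ℝ} {x : ℕ → ℝ} (hp : 0 ≤ p) {m n : ℕ}
    (hsep : ∀ j ∈ Ico m n, x (j + 1) ≤ p * x j) {a b : ℕ} (ha : m ≤ a) (hab : a ≤ b)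
    (hb : b ≤ n) : x b ≤ p ^ (b - a) * x a := by
  induction b, hab using Nat.le_induction with
  | base => simp
  | succ b hab ih =>
    calc x (b + 1) ≤ p * x b := hsep b (mem_Ico.2 ⟨ha.trans hab, hb⟩)
      _ ≤ p * (p ^ (b - a) * x a) := mul_le_mul_of_nonneg_left (ih (by omega)) hp
      _ = p ^ (b + 1 - a) * x a := by rw [Nat.sub_add_comm hab, pow_succ]; ring

def headSlack (p : ℝ) (x : ℕ → ℝ) (i : ℕ) : ℝ :=
  ∑ j ∈ Icc 1 i, (p ^ i * x j - x (i + 1) * p ^ (j - 1))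

def tailSlack (p : ℝ) (x : ℕ → ℝ) (i r : ℕ) : ℝ :=
  ∑ j ∈ Icc (i + 1) r, (x (i + 1) * p ^ (j - (i + 1)) - x j)

section Slacks

variable {p : ℝ} {x : ℕ → ℝ} {i r : ℕ}

theorem mul_one_sub_pow_sub_eq_slacks (hp : p ≠ 1) (hir : i ≤ r)
    (hsum : ∑ j ∈ Icc 1 r, x j = 1) :
    (∑ j ∈ Icc 1 i, x j - i * x (i + 1)) * (1 - p ^ r) - (i * p ^ (i + 1) - (i + 1) * p ^ i + 1)
      = (1 + i * (1 - p) - p ^ (r - i)) * headSlack p x i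
        + (i * p ^ (i + 1) - (i + 1) * p ^ i + 1) * tailSlack p x i r := by
  have hG := one_sub_mul_sum_Icc_pow p 0 i
  have hK := one_sub_mul_sum_Icc_pow p i r
  have hS := sum_Icc_one_add_sum_Icc_succ x hir
  have hr : p ^ r = p ^ i * p ^ (r - i) := by rw [← pow_add, Nat.add_sub_cancel' hir]
  simp only [zero_add, Nat.sub_zero] at hG
  rw [hsum] at hS
  rw [headSlack, tailSlack, sum_sub_distrib, sum_sub_distrib, ← mul_sum, ← mul_sum, ← mul_sum]
  refine mul_left_cancel₀ (sub_ne_zero.2 hp.symm) ?_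
  linear_combination (1 + i * (1 - p) - p ^ (r - i)) * x (i + 1) * hG
    - (i * p ^ (i + 1) - (i + 1) * p ^ i + 1) * x (i + 1) * hK
    + (1 - p) * (i * p ^ (i + 1) - (i + 1) * p ^ i + 1) * hS
    - (1 - p) * (∑ j ∈ Icc 1 i, x j - i * x (i + 1)) * hr

theorem mul_pow_le_pow_mul_of_mem_Icc (hp : 0 ≤ p) (hsep : ∀ j ∈ Ico 1 r, x (j + 1) ≤ p * x j)
    (hir : i + 1 ≤ r) {j : ℕ} (hj : j ∈ Icc 1 i) : x (i + 1) * p ^ (j - 1) ≤ p ^ i * x j := by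
  obtain ⟨hj1, hji⟩ := mem_Icc.1 hj
  calc x (i + 1) * p ^ (j - 1) ≤ p ^ (i + 1 - j) * x j * p ^ (j - 1) :=
        mul_le_mul_of_nonneg_right (le_pow_sub_mul_of_succ_le_mul hp hsep hj1 (by omega) hir)
          (pow_nonneg hp _)
    _ = p ^ i * x j := by rw [mul_right_comm, ← pow_add]; congr 2; omega

theorem le_mul_pow_of_mem_Icc (hp : 0 ≤ p) (hsep : ∀ j ∈ Ico 1 r, x (j + 1) ≤ p * x j)
    {j : ℕ} (hj : j ∈ Icc (i + 1) r) : x j ≤ x (i + 1) * p ^ (j - (i + 1)) := by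
  obtain ⟨hij, hjr⟩ := mem_Icc.1 hj
  rw [mul_comm]
  exact le_pow_sub_mul_of_succ_le_mul hp hsep (by omega) hij hjr

theorem headSlack_nonneg (hp : 0 ≤ p) (hsep : ∀ j ∈ Ico 1 r, x (j + 1) ≤ p * x j)
    (hir : i + 1 ≤ r) : 0 ≤ headSlack p x i :=
  sum_nonneg fun _ hj ↦ sub_nonneg.2 (mul_pow_le_pow_mul_of_mem_Icc hp hsep hir hj)

theorem tailSlack_nonneg (hp : 0 ≤ p) (hsep : ∀ j ∈ Ico 1 r, x (j + 1) ≤ p * x j) :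
    0 ≤ tailSlack p x i r :=
  sum_nonneg fun _ hj ↦ sub_nonneg.2 (le_mul_pow_of_mem_Icc hp hsep hj)

theorem headSlack_eq_zero_iff (hp : 0 ≤ p) (hsep : ∀ j ∈ Ico 1 r, x (j + 1) ≤ p * x j)
    (hir : i + 1 ≤ r) :
    headSlack p x i = 0 ↔ ∀ j ∈ Icc 1 i, p ^ i * x j = x (i + 1) * p ^ (j - 1) := by
  rw [headSlack, sum_eq_zero_iff_of_nonneg fun _ hj ↦
    sub_nonneg.2 (mul_pow_le_pow_mul_of_mem_Icc hp hsep hir hj)]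
  simp only [sub_eq_zero]

theorem tailSlack_eq_zero_iff (hp : 0 ≤ p) (hsep : ∀ j ∈ Ico 1 r, x (j + 1) ≤ p * x j) :
    tailSlack p x i r = 0 ↔ ∀ j ∈ Icc (i + 1) r, x (i + 1) * p ^ (j - (i + 1)) = x j := by
  rw [tailSlack, sum_eq_zero_iff_of_nonneg fun _ hj ↦
    sub_nonneg.2 (le_mul_pow_of_mem_Icc hp hsep hj)]
  simp only [sub_eq_zero]

theorem headSlack_eq_zero_and_tailSlack_eq_zero_iff (hp : 0 < p)
    (hsep : ∀ j ∈ Ico 1 r, x (j + 1) ≤ p * x j) (hir : i + 1 ≤ r) :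
    headSlack p x i = 0 ∧ tailSlack p x i r = 0 ↔ ∃ c, ∀ j ∈ Icc 1 r, x j = c * p ^ (j - 1) := by
  rw [headSlack_eq_zero_iff hp.le hsep hir, tailSlack_eq_zero_iff hp.le hsep]
  have hpow {j : ℕ} (hj : i + 1 ≤ j) : p ^ (j - 1) = p ^ i * p ^ (j - (i + 1)) := by
    rw [← pow_add]; congr 1; omega
  constructor
  · rintro ⟨hhead, htail⟩
    refine ⟨x (i + 1) / p ^ i, fun j hj ↦ ?_⟩
    rcases le_or_gt j i with hji | hij
    · rw [div_mul_eq_mul_div, ← hhead j (mem_Icc.2 ⟨(mem_Icc.1 hj).1, hji⟩),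
        mul_div_cancel_left₀ _ (pow_pos hp i).ne']
    · rw [← htail j (mem_Icc.2 ⟨hij, (mem_Icc.1 hj).2⟩), hpow hij]
      field_simp
  · rintro ⟨c, hc⟩
    have hcr {j : ℕ} (hij : i + 1 ≤ j) (hjr : j ≤ r) : x j = c * p ^ i * p ^ (j - (i + 1)) := by
      rw [hc j (mem_Icc.2 ⟨by omega, hjr⟩), hpow hij, mul_assoc]
    refine ⟨fun j hj ↦ ?_, fun j hj ↦ ?_⟩
    · obtain ⟨hj1, hji⟩ := mem_Icc.1 hj
      rw [hc j (mem_Icc.2 ⟨hj1, by omega⟩), hcr le_rfl hir, Nat.sub_self, pow_zero, mul_one]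
      ring
    · obtain ⟨hij, hjr⟩ := mem_Icc.1 hj
      rw [hcr hij hjr, hcr le_rfl hir, Nat.sub_self, pow_zero, mul_one]

end Slacks

theorem stmt0_general (p : ℝ) (hp0 : 0 < p) (hp1 : p < 1) (r i : ℕ)
    (hi1 : 1 ≤ i) (hi2 : i ≤ r - 1) (x : ℕ → ℝ)
    (hsum : ∑ j ∈ Finset.Icc 1 r, x j = 1)
    (hsep : ∀ j ∈ Finset.Icc 1 (r - 1), x (j + 1) ≤ p * x j) :
    ((i : ℝ) * p ^ (i + 1) - ((i : ℝ) + 1) * p ^ i + 1) / (1 - p ^ r)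
      ≤ (∑ j ∈ Finset.Icc 1 i, x j) - (i : ℝ) * x (i + 1)
    ∧ ((∑ j ∈ Finset.Icc 1 i, x j) - (i : ℝ) * x (i + 1)
        = ((i : ℝ) * p ^ (i + 1) - ((i : ℝ) + 1) * p ^ i + 1) / (1 - p ^ r)
      ↔ ∀ j ∈ Finset.Icc 1 r, x j = (1 - p) * p ^ (j - 1) / (1 - p ^ r)) := by
  have hir : i + 1 ≤ r := by omega
  have hsep' : ∀ j ∈ Ico 1 r, x (j + 1) ≤ p * x j := fun j hj ↦
    hsep j (by simp only [mem_Ico, mem_Icc] at hj ⊢; omega)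
  have hpr : p ^ r < 1 := pow_lt_one₀ hp0.le hp1 (by omega)
  have hα : 0 < 1 + i * (1 - p) - p ^ (r - i) := by
    have : p ^ (r - i) < 1 := pow_lt_one₀ hp0.le hp1 (by omega)
    nlinarith
  have hN := mul_pow_succ_sub_succ_mul_pow_add_one_pos hp0 hp1 hi1
  have hH := mul_nonneg hα.le (headSlack_nonneg hp0.le hsep' hir)
  have hT := mul_nonneg hN.le (tailSlack_nonneg (i := i) hp0.le hsep')
  have hgap := mul_one_sub_pow_sub_eq_slacks hp1.ne (by omega : i ≤ r) hsum
  rw [div_le_iff₀ (sub_pos.2 hpr), eq_div_iff (sub_pos.2 hpr).ne',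
    ← exists_eq_mul_pow_iff hpr.ne hsum,
    ← headSlack_eq_zero_and_tailSlack_eq_zero_iff hp0 hsep' hir, ← sub_eq_zero, hgap,
    add_eq_zero_iff_of_nonneg hH hT]
  refine ⟨by linarith, ?_⟩
  simp only [mul_eq_zero, hα.ne', hN.ne', false_or]

/-- Lemma EC.4 ("Lemma fOA"): lower bound on `∑_{j=1}^i x_j − i·x_{i+1}` for
`p`-separable probability vectors, with equality exactly at the geometric
(Ordinal Attraction) distribution. -/
theorem stmt0 (p : ℝ) (hp0 : 0 < p) (hp1 : p < 1) (r i : ℕ) (hr : 2 ≤ r)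
    (hi1 : 1 ≤ i) (hi2 : i ≤ r - 1) (x : ℕ → ℝ)
    (hx0 : ∀ j ∈ Finset.Icc 1 r, 0 ≤ x j)
    (hsum : ∑ j ∈ Finset.Icc 1 r, x j = 1)
    (hsep : ∀ j ∈ Finset.Icc 1 (r - 1), x (j + 1) ≤ p * x j) :
    ((i : ℝ) * p ^ (i + 1) - ((i : ℝ) + 1) * p ^ i + 1) / (1 - p ^ r)
      ≤ (∑ j ∈ Finset.Icc 1 i, x j) - (i : ℝ) * x (i + 1)
    ∧ ((∑ j ∈ Finset.Icc 1 i, x j) - (i : ℝ) * x (i + 1)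
        = ((i : ℝ) * p ^ (i + 1) - ((i : ℝ) + 1) * p ^ i + 1) / (1 - p ^ r)
      ↔ ∀ j ∈ Finset.Icc 1 r, x j = (1 - p) * p ^ (j - 1) / (1 - p ^ r)) :=
  stmt0_general p hp0 hp1 r i hi1 hi2 x hsum hsep
end

section
/- Fix an integer K ≥ 2 and reals g(j,k) for 1 ≤ j ≤ k ≤ K such that Σ_{j=1}^k g(j,k) = 1 for every k ∈ {2,…,K}, and such that 1 − K·g(K,K) ≠ 0 and 1 − (K−r+1)·g(K−r+1, K−r+1) ≠ 0 for every r ∈ {2,…,K−1}. Define D(1) = 1/(1 − K·g(K,K)) and, recursively for r = 2,…,K−1, D(r) = (K−r+1)·[Σ_{i=1}^{r−1} (g(K−r+1, K−i+1) − g(K−r+2, K−i+1))·D(i)] / (1 − (K−r+1)·g(K−r+1, K−r+1)). Then for every r ∈ {2,…,K−1}: Σ_{i=1}^{r−1} [Σ_{j=1}^{K−r+1} g(j, K−i+1) − (K−r+1)·g(K−r+2, K−i+1)]·D(i) = 1. -/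
/-- Equation (prop_OA_induction): the recursively defined stage-duration
quantities `D r` of Nested Elimination satisfy
`∑_{i=1}^{r−1} [∑_{j=1}^{K−r+1} g(j,K−i+1) − (K−r+1)·g(K−r+2,K−i+1)]·D(i) = 1`. -/
theorem stmt1 (K : ℕ) (hK : 2 ≤ K) (g : ℕ → ℕ → ℝ) (D : ℕ → ℝ)
    (hsum : ∀ k ∈ Finset.Icc 2 K, ∑ j ∈ Finset.Icc 1 k, g j k = 1)
    (hden1 : 1 - (K : ℝ) * g K K ≠ 0)
    (hdenr : ∀ r ∈ Finset.Icc 2 (K - 1),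
      1 - ((K - r + 1 : ℕ) : ℝ) * g (K - r + 1) (K - r + 1) ≠ 0)
    (hD1 : D 1 = 1 / (1 - (K : ℝ) * g K K))
    (hDr : ∀ r ∈ Finset.Icc 2 (K - 1),
      D r = ((K - r + 1 : ℕ) : ℝ) *
        (∑ i ∈ Finset.Icc 1 (r - 1),
          (g (K - r + 1) (K - i + 1) - g (K - r + 2) (K - i + 1)) * D i)
        / (1 - ((K - r + 1 : ℕ) : ℝ) * g (K - r + 1) (K - r + 1))) :
    ∀ r ∈ Finset.Icc 2 (K - 1),
      ∑ i ∈ Finset.Icc 1 (r - 1),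
        ((∑ j ∈ Finset.Icc 1 (K - r + 1), g j (K - i + 1))
          - ((K - r + 1 : ℕ) : ℝ) * g (K - r + 2) (K - i + 1)) * D i = 1 := by
  have key : ∀ r, 2 ≤ r → r ≤ K - 1 →
      ∑ i ∈ Finset.Icc 1 (r - 1),
        ((∑ j ∈ Finset.Icc 1 (K - r + 1), g j (K - i + 1))
          - ((K - r + 1 : ℕ) : ℝ) * g (K - r + 2) (K - i + 1)) * D i = 1 := by
    intro r hr2
    induction r, hr2 using Nat.le_induction with
    | base =>
      intro hrK
      have hs := hsum K (by rw [Finset.mem_Icc]; omega)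
      rw [show K = (K - 1) + 1 from by omega,
        Finset.sum_Icc_succ_top (by omega : 1 ≤ K - 1 + 1)] at hs
      simp only [show K - 1 + 1 = K from by omega] at hs
      simp only [show (2:ℕ) - 1 = 1 from rfl, show K - 2 + 1 = K - 1 from by omega,
        show K - 2 + 2 = K from by omega, Finset.Icc_self, Finset.sum_singleton,
        show K - 1 + 1 = K from by omega]
      have hc : ((K - 1 : ℕ) : ℝ) = (K : ℝ) - 1 := by
        rw [Nat.cast_sub (by omega)]; norm_num
      have hb : (∑ j ∈ Finset.Icc 1 (K - 1), g j K) - ((K - 1 : ℕ) : ℝ) * g K K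
          = 1 - (K : ℝ) * g K K := by
        rw [hc]; linear_combination hs
      rw [hb, hD1, mul_one_div, div_self hden1]
    | succ r hr ih =>
      intro hrK
      obtain ⟨s, rfl⟩ : ∃ s, r = s + 1 := ⟨r - 1, by omega⟩
      have hS := ih (by omega)
      simp only [show s + 1 - 1 = s from rfl] at hS
      simp only [show s + 1 + 1 - 1 = s + 1 from rfl,
        show K - (s + 1 + 1) + 1 = K - (s + 1) from by omega,
        show K - (s + 1 + 1) + 2 = K - (s + 1) + 1 from by omega]
      rw [Finset.sum_Icc_succ_top (by omega : 1 ≤ s + 1)]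
      have hsplit : ∀ i ∈ Finset.Icc 1 s,
          ((∑ j ∈ Finset.Icc 1 (K - (s + 1)), g j (K - i + 1))
            - ((K - (s + 1) : ℕ) : ℝ) * g (K - (s + 1) + 1) (K - i + 1)) * D i
          = ((∑ j ∈ Finset.Icc 1 (K - (s + 1) + 1), g j (K - i + 1))
            - ((K - (s + 1) + 1 : ℕ) : ℝ) * g (K - (s + 1) + 2) (K - i + 1)) * D i
            - ((K - (s + 1) + 1 : ℕ) : ℝ) *
              ((g (K - (s + 1) + 1) (K - i + 1) - g (K - (s + 1) + 2) (K - i + 1)) * D i) := by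
        intro i _
        rw [Finset.sum_Icc_succ_top (by omega : 1 ≤ K - (s + 1) + 1)]
        push_cast
        ring
      rw [Finset.sum_congr rfl hsplit, Finset.sum_sub_distrib, hS, ← Finset.mul_sum]
      have hden := hdenr (s + 1) (by rw [Finset.mem_Icc]; omega)
      have hd := hDr (s + 1) (by rw [Finset.mem_Icc]; omega)
      simp only [show s + 1 - 1 = s from rfl] at hd
      rw [eq_div_iff hden] at hd
      rw [← hd]
      have hs1 := hsum (K - (s + 1) + 1) (by rw [Finset.mem_Icc]; omega)
      rw [Finset.sum_Icc_succ_top (by omega : 1 ≤ K - (s + 1) + 1)] at hs1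
      push_cast at hs1 ⊢
      linear_combination D (s + 1) * hs1
  intro r hr
  rw [Finset.mem_Icc] at hr
  exact key r hr.1 hr.2
end

section
/- Fix an integer K ≥ 2 and a real p ∈ (0,1). Let reals g(j,k) for 1 ≤ j ≤ k ≤ K satisfy, for every k ∈ {2,…,K}: g(j,k) > 0 for all j ∈ {1,…,k}, Σ_{j=1}^k g(j,k) = 1, and g(j+1,k) ≤ p·g(j,k) for all j ∈ {1,…,k−1}. Define D(1) = 1/(1 − K·g(K,K)) and, recursively for r = 2,…,K−1, D(r) = (K−r+1)·[Σ_{i=1}^{r−1} (g(K−r+1, K−i+1) − g(K−r+2, K−i+1))·D(i)] / (1 − (K−r+1)·g(K−r+1, K−r+1)). Then Σ_{r=1}^{K−1} D(r) = (1+p)/(1−p) + Σ_{r=1}^{K−2} (1−p)·p^{K−r}/((K−r)·p^{K−r+1} − (K−r+1)·p^{K−r} + 1) holds if and only if g(j,k) = (1−p)·p^{j−1}/(1−p^k) for every k ∈ {2,…,K} and j ∈ {1,…,k}. -/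
/-!
Index the stages by the size `k = K + 1 - r` of the display set, so that `E k = D (K + 1 - k)`,
and call `excess q m = ∑_{j<m} (q j - q m)` the excess of a row `q` at `m`. For the row of `[m]`
it is the denominator `1 - m g(m,m)`, and `excess q (m+1) - excess q m = m (q m - q (m+1))`;
hence the recursion for `D` says precisely that `S m = ∑_{k ≥ m} E k · excess (g · k) m` does not
depend on `m`, i.e. `S m = 1`.

Among `p`-separable rows of size `k`, the geometric row has the least excess at every `m ≥ 2`,
and it is the only minimiser: the gap is a positive combination of the slacks of the
inequalities `q j ≤ p ^ (j - i) q i`. Abel summation of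
`1 - p^k = (1 - p^2) + ∑_{3 ≤ l ≤ k} (1 - p) p^(l-1)` writes `∑ E k` as a positive combination of
the numbers `∑_{k ≥ l} E k · excess (geomRow p k) l ≤ S l = 1`, while the closed-form bound is the
same combination with every such number replaced by `1`. So equality holds iff each row attains
the minimal excess, i.e. iff every row is geometric.
-/

open Finset

noncomputable def excess (q : ℕ → ℝ) (m : ℕ) : ℝ := ∑ j ∈ Ico 1 m, (q j - q m)

/-- In the closed form of the denominators of the bound; by `excess_geomRow` it is `1 - p ^ k`
times the excess at `s + 1` of the geometric row of size `k`. -/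
noncomputable def geomExcess (p : ℝ) (s : ℕ) : ℝ :=
  s * p ^ (s + 1) - ((s + 1 : ℕ) : ℝ) * p ^ s + 1

noncomputable def geomRow (p : ℝ) (k j : ℕ) : ℝ := (1 - p) * p ^ (j - 1) / (1 - p ^ k)

theorem excess_eq_sum_sub (q : ℕ → ℝ) {m : ℕ} (hm : 1 ≤ m) :
    excess q m = ∑ j ∈ Ico 1 m, q j - (m - 1) * q m := by
  simp [excess, sum_sub_distrib, Nat.cast_sub hm]

theorem excess_add_one (q : ℕ → ℝ) (m : ℕ) :
    excess q (m + 1) = excess q m + m * (q m - q (m + 1)) := by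
  rcases Nat.eq_zero_or_pos m with rfl | hm
  · simp [excess]
  · rw [excess_eq_sum_sub q hm, excess_eq_sum_sub q (by omega), sum_Ico_succ_top hm]
    push_cast
    ring

theorem excess_eq_one_sub_mul {q : ℕ → ℝ} {m : ℕ} (hm : 1 ≤ m) (hsum : ∑ j ∈ Icc 1 m, q j = 1) :
    excess q m = 1 - m * q m := by
  rw [← Ico_add_one_right_eq_Icc, sum_Ico_succ_top hm] at hsum
  rw [excess_eq_sum_sub q hm]
  linarith

theorem excess_congr {q q' : ℕ → ℝ} {m : ℕ} (h : ∀ j ∈ Icc 1 m, q j = q' j) :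
    excess q m = excess q' m := by
  rcases Nat.eq_zero_or_pos m with rfl | hm
  · simp [excess]
  · rw [excess, excess, h m (mem_Icc.2 ⟨hm, le_rfl⟩)]
    exact sum_congr rfl fun j hj => by
      rw [h j (mem_Icc.2 ⟨(mem_Ico.1 hj).1, (mem_Ico.1 hj).2.le⟩)]

theorem geomExcess_eq_sum (p : ℝ) (s : ℕ) :
    geomExcess p s = (1 - p) * ∑ i ∈ range s, (p ^ i - p ^ s) := by
  rw [sum_sub_distrib, mul_sub, mul_neg_geom_sum, geomExcess]
  simp only [Nat.cast_add, Nat.cast_one, sum_const, card_range, nsmul_eq_mul]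
  ring

theorem geomExcess_pos {p : ℝ} (hp0 : 0 < p) (hp1 : p < 1) {s : ℕ} (hs : 1 ≤ s) :
    0 < geomExcess p s := by
  rw [geomExcess_eq_sum]
  refine mul_pos (sub_pos.2 hp1) (sum_pos (fun i hi => ?_) (nonempty_range_iff.2 (by omega)))
  exact sub_pos.2 (pow_lt_pow_right_of_lt_one₀ hp0 hp1 (mem_range.1 hi))

theorem excess_geomRow (p : ℝ) (k m : ℕ) :
    excess (geomRow p k) m = geomExcess p (m - 1) / (1 - p ^ k) := by
  rw [excess, geomExcess_eq_sum, mul_sum, sum_div, sum_Ico_eq_sum_range]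
  refine sum_congr rfl fun i _ => ?_
  simp only [geomRow, Nat.add_sub_cancel_left]
  ring

section Separable

variable {p : ℝ} {q : ℕ → ℝ} {k : ℕ}

theorem le_pow_mul_of_sep (hp : 0 ≤ p) (hsep : ∀ j ∈ Icc 1 (k - 1), q (j + 1) ≤ p * q j)
    {i j : ℕ} (hi : 1 ≤ i) (hij : i ≤ j) (hjk : j ≤ k) : q j ≤ p ^ (j - i) * q i := by
  induction j, hij using Nat.le_induction with
  | base => simp
  | succ j hij ih =>
    calc q (j + 1) ≤ p * q j := hsep j (mem_Icc.2 ⟨by omega, by omega⟩)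
      _ ≤ p * (p ^ (j - i) * q i) := mul_le_mul_of_nonneg_left (ih (by omega)) hp
      _ = p ^ (j + 1 - i) * q i := by rw [Nat.sub_add_comm hij, pow_succ]; ring

theorem pow_mul_sub_nonneg_of_lt (hp : 0 ≤ p) (hsep : ∀ j ∈ Icc 1 (k - 1), q (j + 1) ≤ p * q j)
    {m : ℕ} (hmk : m ≤ k) : ∀ j ∈ Ico 1 m, 0 ≤ p ^ (m - 1) * q j - p ^ (j - 1) * q m := by
  intro j hj
  obtain ⟨hj1, hjm⟩ := mem_Ico.1 hj
  have hle := mul_le_mul_of_nonneg_left (le_pow_mul_of_sep hp hsep hj1 hjm.le hmk)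
    (pow_nonneg hp (j - 1))
  have hpow : p ^ (m - 1) = p ^ (j - 1) * p ^ (m - j) := by rw [← pow_add]; congr 1; omega
  rw [hpow]
  linarith

theorem pow_mul_sub_nonneg_of_le (hp : 0 ≤ p) (hsep : ∀ j ∈ Icc 1 (k - 1), q (j + 1) ≤ p * q j)
    {m : ℕ} (hm : 1 ≤ m) : ∀ j ∈ Icc m k, 0 ≤ p ^ (j - m) * q m - q j := fun _ hj =>
  sub_nonneg.2 (le_pow_mul_of_sep hp hsep hm (mem_Icc.1 hj).1 (mem_Icc.1 hj).2)

theorem eq_geomRow_of_pow_mul_eq (hp0 : 0 < p) (hp1 : p < 1) (hsum : ∑ j ∈ Icc 1 k, q j = 1)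
    {m : ℕ} (h : ∀ j ∈ Icc 1 k, p ^ (m - 1) * q j = p ^ (j - 1) * q m) :
    ∀ j ∈ Icc 1 k, q j = geomRow p k j := by
  have hgeom : (1 - p) * ∑ j ∈ Icc 1 k, p ^ (j - 1) = 1 - p ^ k := by
    rw [← Ico_add_one_right_eq_Icc, sum_Ico_eq_sum_range]
    simpa using mul_neg_geom_sum p k
  have htot : p ^ (m - 1) = q m * ∑ j ∈ Icc 1 k, p ^ (j - 1) := by
    rw [← mul_one (p ^ (m - 1)), ← hsum, mul_sum, sum_congr rfl h, mul_sum]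
    exact sum_congr rfl fun _ _ => mul_comm _ _
  intro j hj
  have hk : 1 - p ^ k ≠ 0 :=
    (sub_pos.2 (pow_lt_one₀ hp0.le hp1 (by grind))).ne'
  rw [geomRow, eq_div_iff hk, ← hgeom]
  apply mul_left_cancel₀ (pow_ne_zero (m - 1) hp0.ne')
  linear_combination ((1 - p) * ∑ j ∈ Icc 1 k, p ^ (j - 1)) * h j hj
    - ((1 - p) * p ^ (j - 1)) * htot

theorem exists_one_sub_pow_mul_excess_sub_eq (hp0 : 0 < p) (hp1 : p < 1)
    (hsum : ∑ j ∈ Icc 1 k, q j = 1) {m : ℕ} (hm : 2 ≤ m) (hmk : m ≤ k) :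
    ∃ μ ν : ℝ, 0 < μ ∧ 0 < ν ∧
      (1 - p ^ k) * (excess q m - excess (geomRow p k) m)
        = μ * ∑ j ∈ Ico 1 m, (p ^ (m - 1) * q j - p ^ (j - 1) * q m)
          + ν * ∑ j ∈ Icc m k, (p ^ (j - m) * q m - q j) := by
  obtain ⟨a, rfl⟩ : ∃ a, m = a + 1 := ⟨m - 1, by omega⟩
  have hν := geomExcess_pos hp0 hp1 (by omega : 1 ≤ a)
  have hμ : 0 < 1 - p ^ (k - a) + a * (1 - p) := by
    have : p ^ (k - a) ≤ 1 := pow_le_one₀ hp0.le hp1.le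
    have : (1 : ℝ) ≤ a := by exact_mod_cast (by omega : 1 ≤ a)
    nlinarith
  refine ⟨_, _, hμ, hν, ?_⟩
  simp only [Nat.add_sub_cancel]
  have hhead : (1 - p) * ∑ j ∈ Ico 1 (a + 1), p ^ (j - 1) = 1 - p ^ a := by
    rw [sum_Ico_eq_sum_range]
    simpa using mul_neg_geom_sum p a
  have htail : (1 - p) * ∑ j ∈ Icc (a + 1) k, p ^ (j - (a + 1)) = 1 - p ^ (k - a) := by
    rw [← Ico_add_one_right_eq_Icc, sum_Ico_eq_sum_range]
    simpa using mul_neg_geom_sum p (k - a)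
  have hsplit : ∑ j ∈ Ico 1 (a + 1), q j + ∑ j ∈ Icc (a + 1) k, q j = 1 := by
    rw [← hsum, ← Ico_add_one_right_eq_Icc, ← Ico_add_one_right_eq_Icc,
      sum_Ico_consecutive _ (by omega) (by omega)]
  have hpow : p ^ k = p ^ a * p ^ (k - a) := by rw [← pow_add]; congr 1; omega
  have hpk : 1 - p ^ k ≠ 0 := (sub_pos.2 (pow_lt_one₀ hp0.le hp1 (by omega))).ne'
  rw [excess_geomRow, mul_sub, mul_div_cancel₀ _ hpk, hpow, excess_eq_sum_sub q (by omega)]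
  simp only [sum_sub_distrib, ← mul_sum, ← sum_mul, geomExcess] at hsplit ⊢
  push_cast
  apply mul_left_cancel₀ (sub_ne_zero.2 hp1.ne)
  linear_combination ((a * p ^ (a + 1) - (a + 1) * p ^ a + 1) * q (a + 1)) * htail
    - ((1 - p ^ (k - a) + a * (1 - p)) * q (a + 1)) * hhead
    - (1 - p) * (a * p ^ (a + 1) - (a + 1) * p ^ a + 1) * hsplit

theorem excess_geomRow_le (hp0 : 0 < p) (hp1 : p < 1) (hsum : ∑ j ∈ Icc 1 k, q j = 1)
    (hsep : ∀ j ∈ Icc 1 (k - 1), q (j + 1) ≤ p * q j) {m : ℕ} (hm : 2 ≤ m) (hmk : m ≤ k) :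
    excess (geomRow p k) m ≤ excess q m := by
  obtain ⟨μ, ν, hμ, hν, h⟩ := exists_one_sub_pow_mul_excess_sub_eq hp0 hp1 hsum hm hmk
  have hpk : 0 < 1 - p ^ k := sub_pos.2 (pow_lt_one₀ hp0.le hp1 (by omega))
  refine sub_nonneg.1 (nonneg_of_mul_nonneg_right ?_ hpk)
  rw [h]
  exact add_nonneg (mul_nonneg hμ.le (sum_nonneg (pow_mul_sub_nonneg_of_lt hp0.le hsep hmk)))
    (mul_nonneg hν.le (sum_nonneg (pow_mul_sub_nonneg_of_le hp0.le hsep (by omega))))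

theorem eq_geomRow_of_excess_eq (hp0 : 0 < p) (hp1 : p < 1) (hsum : ∑ j ∈ Icc 1 k, q j = 1)
    (hsep : ∀ j ∈ Icc 1 (k - 1), q (j + 1) ≤ p * q j) {m : ℕ} (hm : 2 ≤ m) (hmk : m ≤ k)
    (heq : excess q m = excess (geomRow p k) m) : ∀ j ∈ Icc 1 k, q j = geomRow p k j := by
  obtain ⟨μ, ν, hμ, hν, h⟩ := exists_one_sub_pow_mul_excess_sub_eq hp0 hp1 hsum hm hmk
  have hhead := pow_mul_sub_nonneg_of_lt hp0.le hsep hmk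
  have htail := pow_mul_sub_nonneg_of_le hp0.le hsep (by omega : 1 ≤ m)
  rw [heq, sub_self, mul_zero, eq_comm, add_eq_zero_iff_of_nonneg (mul_nonneg hμ.le
    (sum_nonneg hhead)) (mul_nonneg hν.le (sum_nonneg htail)), mul_eq_zero, mul_eq_zero,
    or_iff_right hμ.ne', or_iff_right hν.ne', sum_eq_zero_iff_of_nonneg hhead,
    sum_eq_zero_iff_of_nonneg htail] at h
  refine eq_geomRow_of_pow_mul_eq (m := m) hp0 hp1 hsum fun j hj => ?_
  obtain ⟨hj1, hjk⟩ := mem_Icc.1 hj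
  rcases lt_or_ge j m with hjm | hjm
  · linarith [h.1 j (mem_Ico.2 ⟨hj1, hjm⟩)]
  · rw [← sub_eq_zero.1 (h.2 j (mem_Icc.2 ⟨hjm, hjk⟩)), ← mul_assoc, ← pow_add]
    congr 2
    omega

theorem excess_pos (hp0 : 0 < p) (hp1 : p < 1) (hsum : ∑ j ∈ Icc 1 k, q j = 1)
    (hsep : ∀ j ∈ Icc 1 (k - 1), q (j + 1) ≤ p * q j) {m : ℕ} (hm : 2 ≤ m) (hmk : m ≤ k) :
    0 < excess q m := by
  refine lt_of_lt_of_le ?_ (excess_geomRow_le hp0 hp1 hsum hsep hm hmk)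
  rw [excess_geomRow]
  exact div_pos (geomExcess_pos hp0 hp1 (by omega)) (sub_pos.2 (pow_lt_one₀ hp0.le hp1 (by omega)))

end Separable

section Recursion

variable {g : ℕ → ℕ → ℝ} {E : ℕ → ℝ} {n K : ℕ}

theorem sum_mul_excess_eq_one (hbase : E K * excess (g · K) K = 1)
    (hrec : ∀ m ∈ Ico n K,
      E m * excess (g · m) m = m * ∑ k ∈ Icc (m + 1) K, (g m k - g (m + 1) k) * E k) :
    ∀ m ∈ Icc n K, ∑ k ∈ Icc m K, E k * excess (g · k) m = 1 := by
  intro m hm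
  rw [mem_Icc] at hm
  obtain ⟨hnm, hmK⟩ := hm
  induction hmK using Nat.decreasingInduction with
  | self => simpa using hbase
  | of_succ m hmK ih =>
    rw [← insert_Icc_add_one_left_eq_Icc hmK.le, sum_insert (by simp), ← ih (by omega),
      hrec m (mem_Ico.2 ⟨hnm, hmK⟩), mul_sum, ← sum_add_distrib]
    refine sum_congr rfl fun k _ => ?_
    rw [excess_add_one]
    ring

theorem pos_of_excess_recursion (hn : 1 ≤ n) (hbase : E K * excess (g · K) K = 1)
    (hrec : ∀ m ∈ Ico n K,
      E m * excess (g · m) m = m * ∑ k ∈ Icc (m + 1) K, (g m k - g (m + 1) k) * E k)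
    (hexc : ∀ m ∈ Icc n K, 0 < excess (g · m) m)
    (hdec : ∀ m ∈ Ico n K, ∀ k ∈ Icc (m + 1) K, g (m + 1) k < g m k) :
    ∀ m ∈ Icc n K, 0 < E m := by
  suffices h : ∀ m, n ≤ m → m ≤ K → ∀ k ∈ Icc m K, 0 < E k from
    fun m hm => h m (mem_Icc.1 hm).1 (mem_Icc.1 hm).2 m (mem_Icc.2 ⟨le_rfl, (mem_Icc.1 hm).2⟩)
  intro m hnm hmK
  induction hmK using Nat.decreasingInduction with
  | self =>
    intro k hk
    rw [Icc_self, mem_singleton] at hk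
    rw [hk]
    exact pos_of_mul_pos_left (hbase ▸ one_pos) (hexc K (mem_Icc.2 ⟨hnm, le_rfl⟩)).le
  | of_succ m hmK ih =>
    have ih := ih (by omega)
    rw [← insert_Icc_add_one_left_eq_Icc hmK.le, forall_mem_insert]
    refine ⟨pos_of_mul_pos_left ?_ (hexc m (mem_Icc.2 ⟨hnm, hmK.le⟩)).le, ih⟩
    rw [hrec m (mem_Ico.2 ⟨hnm, hmK⟩)]
    refine mul_pos (by exact_mod_cast hn.trans hnm) (sum_pos (fun k hk => ?_) (nonempty_Icc.2 hmK))
    exact mul_pos (sub_pos.2 (hdec m (mem_Ico.2 ⟨hnm, hmK⟩) k hk)) (ih k hk)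

end Recursion

theorem sum_Icc_reflect {M : Type*} [AddCommMonoid M] (f : ℕ → M) {a b n : ℕ} (hb : b ≤ n) :
    ∑ i ∈ Icc a b, f i = ∑ k ∈ Icc (n + 1 - b) (n + 1 - a), f (n + 1 - k) := by
  refine sum_nbij' (n + 1 - ·) (n + 1 - ·) ?_ ?_ ?_ ?_ ?_ <;> intro i hi <;>
    simp only [mem_Icc] at hi ⊢
  any_goals omega
  rw [Nat.sub_sub_self (by omega)]

theorem sum_mul_one_sub_pow (p : ℝ) (x : ℕ → ℝ) (K : ℕ) :
    ∑ k ∈ Icc 2 K, x k * (1 - p ^ k)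
      = (1 - p ^ 2) * ∑ k ∈ Icc 2 K, x k
        + ∑ l ∈ Icc 3 K, (1 - p) * p ^ (l - 1) * ∑ k ∈ Icc l K, x k := by
  have hgeom : ∀ k ∈ Icc 2 K, 1 - p ^ k = 1 - p ^ 2 + ∑ l ∈ Icc 3 k, (1 - p) * p ^ (l - 1) := by
    intro k hk
    obtain ⟨a, rfl⟩ : ∃ a, k = a + 2 := ⟨k - 2, by grind⟩
    rw [← mul_sum, ← Ico_add_one_right_eq_Icc, sum_Ico_eq_sum_range]
    simp only [show ∀ i, 3 + i - 1 = i + 2 by omega, pow_add, ← sum_mul,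
      show a + 2 + 1 - 3 = a by omega]
    linear_combination -p ^ 2 * mul_neg_geom_sum p a
  rw [sum_congr rfl fun k hk => by rw [hgeom k hk]]
  simp only [mul_add, sum_add_distrib, mul_sum]
  rw [sum_comm' (t' := Icc 3 K) (s' := fun l => Icc l K) (fun k l => by simp only [mem_Icc]; omega)]
  simp only [mul_comm]

theorem sum_eq_weighted_sum_excess_geomRow {p : ℝ} {E : ℕ → ℝ} {K : ℕ} (hp0 : 0 < p)
    (hp1 : p < 1) :
    ∑ k ∈ Icc 2 K, E k
      = (1 + p) / (1 - p) * ∑ k ∈ Icc 2 K, E k * excess (geomRow p k) 2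
        + ∑ l ∈ Icc 3 K, (1 - p) * p ^ (l - 1) / geomExcess p (l - 1)
            * ∑ k ∈ Icc l K, E k * excess (geomRow p k) l := by
  have hpk : ∀ k ≥ 1, 1 - p ^ k ≠ 0 := fun k hk =>
    (sub_pos.2 (pow_lt_one₀ hp0.le hp1 (by omega))).ne'
  have hfactor : ∀ l, ∑ k ∈ Icc l K, E k * excess (geomRow p k) l
      = geomExcess p (l - 1) * ∑ k ∈ Icc l K, E k / (1 - p ^ k) := by
    intro l
    simp only [excess_geomRow, mul_sum]
    exact sum_congr rfl fun k _ => by ring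
  have hge1 : geomExcess p 1 = (1 - p) ^ 2 := by rw [geomExcess]; push_cast; ring
  calc ∑ k ∈ Icc 2 K, E k = ∑ k ∈ Icc 2 K, E k / (1 - p ^ k) * (1 - p ^ k) :=
        sum_congr rfl fun k hk => (div_mul_cancel₀ _ (hpk k (by grind))).symm
    _ = _ := sum_mul_one_sub_pow p _ K
    _ = _ := by
      simp only [hfactor, hge1]
      congr 1
      · field_simp
        ring
      · refine sum_congr rfl fun l hl => ?_
        field_simp [(geomExcess_pos hp0 hp1 (by grind : 1 ≤ l - 1)).ne']

theorem sum_eq_iff_eq_geomRow {p : ℝ} {g : ℕ → ℕ → ℝ} {E : ℕ → ℝ} {K : ℕ} (hK : 2 ≤ K)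
    (hp0 : 0 < p) (hp1 : p < 1)
    (hpos : ∀ k ∈ Icc 2 K, ∀ j ∈ Icc 1 k, 0 < g j k)
    (hsum : ∀ k ∈ Icc 2 K, ∑ j ∈ Icc 1 k, g j k = 1)
    (hsep : ∀ k ∈ Icc 2 K, ∀ j ∈ Icc 1 (k - 1), g (j + 1) k ≤ p * g j k)
    (hbase : E K * excess (g · K) K = 1)
    (hrec : ∀ m ∈ Ico 2 K,
      E m * excess (g · m) m = m * ∑ k ∈ Icc (m + 1) K, (g m k - g (m + 1) k) * E k) :
    ∑ k ∈ Icc 2 K, E k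
        = (1 + p) / (1 - p) + ∑ l ∈ Icc 3 K, (1 - p) * p ^ (l - 1) / geomExcess p (l - 1)
      ↔ ∀ k ∈ Icc 2 K, ∀ j ∈ Icc 1 k, g j k = geomRow p k j := by
  have hrow : ∀ l ∈ Icc 2 K, ∀ k ∈ Icc l K, excess (geomRow p k) l ≤ excess (g · k) l :=
    fun l hl k hk => excess_geomRow_le hp0 hp1 (hsum k (by grind)) (hsep k (by grind))
      (mem_Icc.1 hl).1 (mem_Icc.1 hk).1
  have hS := sum_mul_excess_eq_one hbase hrec
  have hE := pos_of_excess_recursion (by norm_num) hbase hrec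
    (fun m hm => excess_pos hp0 hp1 (hsum m hm) (hsep m hm) (mem_Icc.1 hm).1 le_rfl)
    (fun m hm k hk => by
      have hk' : k ∈ Icc 2 K := by grind
      have := hsep k hk' m (by grind)
      have := hpos k hk' m (by grind)
      nlinarith)
  have hV : ∀ l ∈ Icc 2 K, ∑ k ∈ Icc l K, E k * excess (geomRow p k) l ≤ 1 := fun l hl =>
    hS l hl ▸ sum_le_sum fun k hk => mul_le_mul_of_nonneg_left (hrow l hl k hk) (hE k (by grind)).le
  have hV_iff : ∀ l ∈ Icc 2 K, ∑ k ∈ Icc l K, E k * excess (geomRow p k) l = 1 ↔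
      ∀ k ∈ Icc l K, excess (g · k) l = excess (geomRow p k) l := fun l hl => by
    rw [← hS l hl, sum_eq_sum_iff_of_le fun k hk =>
      mul_le_mul_of_nonneg_left (hrow l hl k hk) (hE k (by grind)).le]
    exact forall₂_congr fun k hk => by rw [mul_right_inj' (hE k (by grind)).ne', eq_comm]
  have hc2 : 0 < (1 + p) / (1 - p) := div_pos (by linarith) (by linarith)
  have hK2 : 2 ∈ Icc 2 K := mem_Icc.2 ⟨le_rfl, hK⟩
  rw [sum_eq_weighted_sum_excess_geomRow hp0 hp1]
  constructor
  · intro h k hk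
    have hrest := sum_le_sum (s := Icc 3 K) fun l hl => mul_le_of_le_one_right
      (div_pos (mul_pos (sub_pos.2 hp1) (pow_pos hp0 (l - 1)))
        (geomExcess_pos hp0 hp1 (by grind : 1 ≤ l - 1))).le (hV l (by grind))
    have hV2 : ∑ k ∈ Icc 2 K, E k * excess (geomRow p k) 2 = 1 := by
      have := mul_le_of_le_one_right hc2.le (hV 2 hK2)
      exact mul_left_cancel₀ hc2.ne' (by linarith)
    exact eq_geomRow_of_excess_eq hp0 hp1 (hsum k hk) (hsep k hk) le_rfl (mem_Icc.1 hk).1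
      ((hV_iff 2 hK2).1 hV2 k hk)
  · intro hgeo
    have hV1 : ∀ l ∈ Icc 2 K, ∑ k ∈ Icc l K, E k * excess (geomRow p k) l = 1 :=
      fun l hl => (hV_iff l hl).2 fun k hk =>
        excess_congr fun j hj => hgeo k (by grind) j (by grind)
    rw [hV1 2 hK2, mul_one]
    exact congrArg _ (sum_congr rfl fun l hl => by rw [hV1 l (by grind), mul_one])

theorem mul_one_sub_eq_of_reflected_recursion {K : ℕ} {g : ℕ → ℕ → ℝ} {D : ℕ → ℝ}
    (hDr : ∀ r ∈ Icc 2 (K - 1),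
      D r = ((K - r + 1 : ℕ) : ℝ) *
        (∑ i ∈ Icc 1 (r - 1), (g (K - r + 1) (K - i + 1) - g (K - r + 2) (K - i + 1)) * D i)
        / (1 - ((K - r + 1 : ℕ) : ℝ) * g (K - r + 1) (K - r + 1)))
    (hden : ∀ m ∈ Ico 2 K, 1 - m * g m m ≠ 0) :
    ∀ m ∈ Ico 2 K, D (K + 1 - m) * (1 - m * g m m)
      = m * ∑ k ∈ Icc (m + 1) K, (g m k - g (m + 1) k) * D (K + 1 - k) := by
  intro m hm
  have h := hDr (K + 1 - m) (by grind)
  rw [show K - (K + 1 - m) + 1 = m by grind, show K - (K + 1 - m) + 2 = m + 1 by grind,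
    sum_Icc_reflect _ (by grind : K + 1 - m - 1 ≤ K)] at h
  rw [h, div_mul_cancel₀ _ (hden m hm), show K + 1 - (K + 1 - m - 1) = m + 1 by grind,
    show K + 1 - 1 = K by omega]
  congr 1
  refine sum_congr rfl fun k hk => ?_
  rw [show K - (K + 1 - k) + 1 = k by grind]

/-- Characterization of equality: `∑_{r=1}^{K−1} D(r)` attains its maximal value
exactly at the geometric (Ordinal Attraction) choice probabilities. -/
theorem stmt3 (K : ℕ) (hK : 2 ≤ K) (p : ℝ) (hp0 : 0 < p) (hp1 : p < 1)
    (g : ℕ → ℕ → ℝ) (D : ℕ → ℝ)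
    (hpos : ∀ k ∈ Finset.Icc 2 K, ∀ j ∈ Finset.Icc 1 k, 0 < g j k)
    (hsum : ∀ k ∈ Finset.Icc 2 K, ∑ j ∈ Finset.Icc 1 k, g j k = 1)
    (hsep : ∀ k ∈ Finset.Icc 2 K, ∀ j ∈ Finset.Icc 1 (k - 1), g (j + 1) k ≤ p * g j k)
    (hD1 : D 1 = 1 / (1 - (K : ℝ) * g K K))
    (hDr : ∀ r ∈ Finset.Icc 2 (K - 1),
      D r = ((K - r + 1 : ℕ) : ℝ) *
        (∑ i ∈ Finset.Icc 1 (r - 1),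
          (g (K - r + 1) (K - i + 1) - g (K - r + 2) (K - i + 1)) * D i)
        / (1 - ((K - r + 1 : ℕ) : ℝ) * g (K - r + 1) (K - r + 1))) :
    (∑ r ∈ Finset.Icc 1 (K - 1), D r
      = (1 + p) / (1 - p)
        + ∑ r ∈ Finset.Icc 1 (K - 2),
            (1 - p) * p ^ (K - r)
              / (((K - r : ℕ) : ℝ) * p ^ (K - r + 1)
                  - ((K - r + 1 : ℕ) : ℝ) * p ^ (K - r) + 1))
    ↔ ∀ k ∈ Finset.Icc 2 K, ∀ j ∈ Finset.Icc 1 k,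
        g j k = (1 - p) * p ^ (j - 1) / (1 - p ^ k) := by
  have hexc : ∀ m ∈ Icc 2 K, excess (g · m) m = 1 - m * g m m := fun m hm =>
    excess_eq_one_sub_mul (by grind) (hsum m hm)
  have hden : ∀ m ∈ Icc 2 K, 0 < excess (g · m) m := fun m hm =>
    excess_pos hp0 hp1 (hsum m hm) (hsep m hm) (mem_Icc.1 hm).1 le_rfl
  have hbase : D (K + 1 - K) * excess (g · K) K = 1 := by
    rw [Nat.add_sub_cancel_left, hD1, ← hexc K (by grind),
      one_div_mul_cancel (hden K (by grind)).ne']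
  have hrec := mul_one_sub_eq_of_reflected_recursion hDr fun m hm =>
    hexc m (by grind) ▸ (hden m (by grind)).ne'
  have hT : ∑ r ∈ Icc 1 (K - 2), (1 - p) * p ^ (K - r) / geomExcess p (K - r)
      = ∑ l ∈ Icc 3 K, (1 - p) * p ^ (l - 1) / geomExcess p (l - 1) := by
    rw [sum_Icc_reflect _ (by omega : K - 2 ≤ K), show K + 1 - (K - 2) = 3 by omega,
      show K + 1 - 1 = K by omega]
    exact sum_congr rfl fun l hl => by rw [show K - (K + 1 - l) = l - 1 by grind]
  have key := sum_eq_iff_eq_geomRow hK hp0 hp1 hpos hsum hsep hbase fun m hm => by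
    rw [hexc m (by grind)]
    exact hrec m hm
  rw [← hT] at key
  rw [sum_Icc_reflect D (by omega : K - 1 ≤ K), show K + 1 - (K - 1) = 2 by omega,
    show K + 1 - 1 = K by omega]
  exact key
end

section
/- For every real p ∈ (0,1) and every integer K ≥ 2: (1/(1−p))·(1 + Σ_{j=2}^K (1−p)²·p^{j−1}/((j−1)·p^j − j·p^{j−1} + 1)) = (1+p)/(1−p) + Σ_{r=1}^{K−2} (1−p)·p^{K−r}/((K−r)·p^{K−r+1} − (K−r+1)·p^{K−r} + 1). -/
/-- Lemma EC.3: the closed-form value of `log(1/p)/I^N` at an Ordinal Attraction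
preference coincides with the closed-form value `log(1/p)/I_*^{OA}`. -/
theorem stmt4 (p : ℝ) (hp0 : 0 < p) (hp1 : p < 1) (K : ℕ) (hK : 2 ≤ K) :
    (1 / (1 - p)) * (1 + ∑ j ∈ Finset.Icc 2 K,
        (1 - p) ^ 2 * p ^ (j - 1)
          / (((j - 1 : ℕ) : ℝ) * p ^ j - (j : ℝ) * p ^ (j - 1) + 1))
    = (1 + p) / (1 - p)
      + ∑ r ∈ Finset.Icc 1 (K - 2),
          (1 - p) * p ^ (K - r)
            / (((K - r : ℕ) : ℝ) * p ^ (K - r + 1)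
                - ((K - r + 1 : ℕ) : ℝ) * p ^ (K - r) + 1) := by
  have h1 : (1 : ℝ) - p ≠ 0 := by linarith
  set f : ℕ → ℝ := fun m =>
    (1 - p) * p ^ m / ((m : ℝ) * p ^ (m + 1) - ((m : ℝ) + 1) * p ^ m + 1) with hf
  -- LHS sum
  have hL : ∑ j ∈ Finset.Icc 2 K,
      (1 - p) ^ 2 * p ^ (j - 1)
        / (((j - 1 : ℕ) : ℝ) * p ^ j - (j : ℝ) * p ^ (j - 1) + 1)
      = (1 - p) * ∑ m ∈ Finset.Icc 1 (K - 1), f m := by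
    rw [Finset.mul_sum]
    refine Finset.sum_nbij' (fun j => j - 1) (fun m => m + 1) ?_ ?_ ?_ ?_ ?_
    · intro j hj; simp only [Finset.mem_Icc] at *; omega
    · intro m hm; simp only [Finset.mem_Icc] at *; omega
    · intro j hj; simp only [Finset.mem_Icc] at hj; omega
    · intro m hm; simp only [Finset.mem_Icc] at hm; omega
    · intro j hj
      simp only [Finset.mem_Icc] at hj
      obtain ⟨n, rfl⟩ : ∃ n, j = n + 2 := ⟨j - 2, by omega⟩
      simp only [hf, Nat.add_sub_cancel]
      push_cast
      rw [show ((n:ℝ) + 1) * p ^ (n + 1 + 1) - ((n:ℝ) + 1 + 1) * p ^ (n + 1) + 1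
            = ((n:ℝ) + 1) * p ^ (n + 2) - ((n:ℝ) + 2) * p ^ (n + 1) + 1 by ring]
      rw [sq, mul_assoc, mul_div_assoc]
  -- RHS sum
  have hR : ∑ r ∈ Finset.Icc 1 (K - 2),
      (1 - p) * p ^ (K - r)
        / (((K - r : ℕ) : ℝ) * p ^ (K - r + 1)
            - ((K - r + 1 : ℕ) : ℝ) * p ^ (K - r) + 1)
      = ∑ m ∈ Finset.Icc 2 (K - 1), f m := by
    refine Finset.sum_nbij' (fun r => K - r) (fun m => K - m) ?_ ?_ ?_ ?_ ?_
    · intro r hr; simp only [Finset.mem_Icc] at *; omega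
    · intro m hm; simp only [Finset.mem_Icc] at *; omega
    · intro r hr; simp only [Finset.mem_Icc] at hr; omega
    · intro m hm; simp only [Finset.mem_Icc] at hm; omega
    · intro r hr
      simp only [hf]
      push_cast
      ring
  rw [hL, hR]
  -- split off m = 1 from the LHS sum
  have hsplit : Finset.Icc 1 (K - 1) = insert 1 (Finset.Icc 2 (K - 1)) := by
    ext x; simp only [Finset.mem_Icc, Finset.mem_insert]; omega
  rw [hsplit, Finset.sum_insert (by simp)]
  have hf1 : f 1 = p / (1 - p) := by
    simp only [hf]
    rw [show ((1:ℕ):ℝ) * p ^ (1 + 1) - (((1:ℕ):ℝ) + 1) * p ^ 1 + 1 = (1 - p) ^ 2 by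
      push_cast; ring]
    rw [pow_one, sq, mul_comm (1 - p) p, mul_div_mul_right _ _ h1]
  rw [hf1]
  field_simp
  ring
end

section
/- Let p ∈ (0,1) and let r ≥ 2 be an integer. For every vector (x_1,…,x_r) of nonnegative reals with Σ_{j=1}^r x_j = 1 and x_{j+1} ≤ p·x_j for all j ∈ {1,…,r−1}, one has x_1 − x_r ≥ (1−p)/(1+p). -/
/-- Lemma EC.7: under a `p`-separable probability vector of length `r ≥ 2`,
the top probability exceeds the bottom one by at least `(1−p)/(1+p)`. -/
theorem stmt5 (p : ℝ) (hp0 : 0 < p) (hp1 : p < 1) (r : ℕ) (hr : 2 ≤ r)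
    (x : ℕ → ℝ) (hx0 : ∀ j ∈ Finset.Icc 1 r, 0 ≤ x j)
    (hsum : ∑ j ∈ Finset.Icc 1 r, x j = 1)
    (hsep : ∀ j ∈ Finset.Icc 1 (r - 1), x (j + 1) ≤ p * x j) :
    (1 - p) / (1 + p) ≤ x 1 - x r := by
  obtain ⟨m, hrm⟩ : ∃ m, r = m + 1 := ⟨r - 1, by omega⟩
  have hm1 : 1 ≤ m := by omega
  have hmr : m = r - 1 := by omega
  have htel : ∑ i ∈ Finset.range m, (x (i + 1) - x (i + 2)) = x 1 - x r := by
    rw [hrm]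
    exact Finset.sum_range_sub' (fun i => x (i + 1)) m
  have hstep : ∀ i ∈ Finset.range m, (1 - p) * x (i + 1) ≤ x (i + 1) - x (i + 2) := by
    intro i hi
    rw [Finset.mem_range] at hi
    have hmem : i + 1 ∈ Finset.Icc 1 (r - 1) := by
      rw [Finset.mem_Icc]; omega
    have h1 := hsep (i + 1) hmem
    have h0 : 0 ≤ x (i + 1) := hx0 (i + 1) (by rw [Finset.mem_Icc]; omega)
    nlinarith
  have hsum' : ∑ i ∈ Finset.range m, x (i + 1) = 1 - x r := by
    have h1 : ∑ j ∈ Finset.Icc 1 r, x j = ∑ j ∈ Finset.Icc 1 m, x j + x r := by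
      rw [hrm]
      exact Finset.sum_Icc_succ_top (by omega) x
    have h2 : ∑ j ∈ Finset.Icc 1 m, x j = ∑ i ∈ Finset.range m, x (i + 1) := by
      rw [← Finset.Ico_add_one_right_eq_Icc, Finset.sum_Ico_eq_sum_range]
      simp [add_comm]
    linarith [hsum]
  have key : (1 - p) * (1 - x r) ≤ x 1 - x r := by
    calc (1 - p) * (1 - x r) = ∑ i ∈ Finset.range m, (1 - p) * x (i + 1) := by
          rw [← Finset.mul_sum, hsum']
      _ ≤ ∑ i ∈ Finset.range m, (x (i + 1) - x (i + 2)) := Finset.sum_le_sum hstep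
      _ = x 1 - x r := htel
  -- bound on x r
  have hmem2 : ({m, m + 1} : Finset ℕ) ⊆ Finset.Icc 1 r := by
    intro j hj
    simp only [Finset.mem_insert, Finset.mem_singleton] at hj
    rw [Finset.mem_Icc]; omega
  have hpair : x m + x (m + 1) ≤ 1 := by
    have := Finset.sum_le_sum_of_subset_of_nonneg hmem2
      (fun j hj _ => hx0 j hj)
    rw [hsum] at this
    have hsum2 : ∑ j ∈ ({m, m + 1} : Finset ℕ), x j = x m + x (m + 1) := by
      rw [Finset.sum_pair (by omega)]
    linarith
  have hsepm : x (m + 1) ≤ p * x m := by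
    have := hsep m (by rw [Finset.mem_Icc]; omega)
    exact this
  have hxr : x r * (1 + p) ≤ p := by
    have h0m : 0 ≤ x m := hx0 m (by rw [Finset.mem_Icc]; omega)
    rw [hrm]
    nlinarith
  have hxrr : x r * (1 + p) ≤ p := hxr
  rw [div_le_iff₀ (by linarith : (0:ℝ) < 1 + p)]
  nlinarith
end

section
/- Fix a real p ∈ (0,1) and an integer K ≥ 2. Let S ⊆ {1,…,K} with |S| = n ≥ 2 and let m ∈ {1,…,K−1}. If both m ∈ S and m+1 ∈ S, then d_S(σ̂_m) = log(1/p)·p^{i−1}·(1−p)²/(1−p^n), where i = |{j ∈ S : j ≤ m}|; otherwise d_S(σ̂_m) = 0. -/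
/-- Ordinal Attraction choice probability of item `i` from display set `S`
under the ranking `σ`: `(1−p)·p^{rank−1}/(1−p^{|S|})`, where the rank of `i`
within `S` under `σ` is `|{j ∈ S : σ j ≤ σ i}|`. -/
noncomputable def oa {K : ℕ} (p : ℝ) (σ : Equiv.Perm (Fin K))
    (S : Finset (Fin K)) (i : Fin K) : ℝ :=
  (1 - p) * p ^ ((S.filter fun j => σ j ≤ σ i).card - 1) / (1 - p ^ S.card)

/-- `d_S(σ)`: KL divergence on `S` between the OA model with the identity
ranking and the OA model with ranking `σ`. -/
noncomputable def dS {K : ℕ} (p : ℝ) (S : Finset (Fin K)) (σ : Equiv.Perm (Fin K)) : ℝ :=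
  ∑ i ∈ S, oa p 1 S i * Real.log (oa p 1 S i / oa p σ S i)

/-- The adjacent transposition `σ̂_m` swapping (0-indexed) items `m` and `m+1`. -/
def adjSwap (K : ℕ) (m : ℕ) : Equiv.Perm (Fin K) :=
  if h : m + 1 < K then Equiv.swap ⟨m, Nat.lt_of_succ_lt h⟩ ⟨m + 1, h⟩ else 1

/-! Because no item lies strictly between `m` and `m + 1`, the swap `σ̂_m` preserves the relative
order of every pair of items other than `{m, m + 1}`. Hence if `S` does not contain both, the two
models agree on `S` and `d_S` vanishes. Otherwise only the terms at `m` and `m + 1` survive: their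
identity probabilities `x` and `p x` are exchanged by `σ̂_m`, and
`x log (1 / p) + p x log p = (1 - p) x log (1 / p)`. -/

open Finset Real Equiv

section CovBy

variable {α : Type*} [LinearOrder α] {a b c : α}

theorem CovBy.le_left_iff_le_right (hab : a ⋖ b) (hcb : c ≠ b) : c ≤ a ↔ c ≤ b :=
  ⟨fun h => h.trans hab.lt.le, fun h => hab.le_of_lt (h.lt_of_ne hcb)⟩

theorem CovBy.left_le_iff_right_le (hab : a ⋖ b) (hca : c ≠ a) : a ≤ c ↔ b ≤ c :=
  ⟨fun h => hab.ge_of_gt (h.lt_of_ne hca.symm), fun h => hab.lt.le.trans h⟩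

theorem swap_le_swap_iff_of_covBy {i j : α} (hab : a ⋖ b) (hij : ¬(i = a ∧ j = b))
    (hji : ¬(i = b ∧ j = a)) : swap a b j ≤ swap a b i ↔ j ≤ i := by
  have := hab.lt.ne
  rw [swap_apply_def, swap_apply_def]
  split_ifs <;> subst_vars <;> simp_all [hab.le_left_iff_le_right, hab.left_le_iff_right_le]

theorem card_filter_le_of_covBy {S : Finset α} (hab : a ⋖ b) (hb : b ∈ S) :
    #(S.filter (· ≤ b)) = #(S.filter (· ≤ a)) + 1 := by
  have : S.filter (· ≤ b) = insert b (S.filter (· ≤ a)) := by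
    ext j
    by_cases hjb : j = b
    · simp [hjb, hb]
    · simp [hjb, hab.le_left_iff_le_right hjb]
  rw [this, card_insert_of_notMem (by simp [hab.lt])]

end CovBy

section OrdinalAttraction

variable {K : ℕ} (p : ℝ) (S : Finset (Fin K))

theorem oa_one (i : Fin K) :
    oa p 1 S i = (1 - p) * p ^ (#(S.filter (· ≤ i)) - 1) / (1 - p ^ #S) := rfl

theorem oa_eq_oa_one_map (σ : Perm (Fin K)) (i : Fin K) :
    oa p σ S i = oa p 1 (S.map σ.toEmbedding) (σ i) := by
  rw [oa_one, filter_map, card_map, card_map]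
  rfl

theorem oa_swap_of_mem {a b : Fin K} (ha : a ∈ S) (hb : b ∈ S) (i : Fin K) :
    oa p (swap a b) S i = oa p 1 S (swap a b i) := by
  rw [oa_eq_oa_one_map]
  congr 1
  refine map_perm fun x hx => ?_
  by_contra hxS
  exact hx (swap_apply_of_ne_of_ne (ne_of_mem_of_not_mem ha hxS).symm
    (ne_of_mem_of_not_mem hb hxS).symm)

theorem oa_swap_of_covBy {a b i : Fin K} (hab : a ⋖ b)
    (h : ∀ j ∈ S, ¬(i = a ∧ j = b) ∧ ¬(i = b ∧ j = a)) :
    oa p (swap a b) S i = oa p 1 S i := by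
  rw [oa_one, oa, filter_congr fun j hj => swap_le_swap_iff_of_covBy hab (h j hj).1 (h j hj).2]

theorem oa_one_of_covBy {a b : Fin K} (hab : a ⋖ b) (ha : a ∈ S) (hb : b ∈ S) :
    oa p 1 S b = p * oa p 1 S a := by
  have hpos : 0 < #(S.filter (· ≤ a)) := card_pos.mpr ⟨a, mem_filter.mpr ⟨ha, le_rfl⟩⟩
  rw [oa_one, oa_one, card_filter_le_of_covBy hab hb, Nat.add_sub_cancel,
    ← Nat.sub_add_cancel hpos, Nat.add_sub_cancel, pow_succ]
  ring

end OrdinalAttraction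

theorem mul_log_div_add_mul_log_div_mul (x p : ℝ) :
    x * log (x / (p * x)) + p * x * log (p * x / x) = log (1 / p) * x * (1 - p) := by
  rcases eq_or_ne x 0 with rfl | hx
  · simp
  rw [div_mul_cancel_right₀ hx, mul_div_assoc, div_self hx, mul_one, log_inv, one_div, log_inv]
  ring

section KullbackLeibler

variable {K : ℕ} (p : ℝ) {S : Finset (Fin K)} {a b : Fin K}

theorem dS_eq_zero_of_forall_oa_eq {σ : Perm (Fin K)} (h : ∀ i ∈ S, oa p σ S i = oa p 1 S i) :
    dS p S σ = 0 :=
  sum_eq_zero fun i hi => by rw [h i hi, log_div_self, mul_zero]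

theorem dS_swap_of_covBy_of_mem (hab : a ⋖ b) (ha : a ∈ S) (hb : b ∈ S) :
    dS p S (swap a b) = log (1 / p) * oa p 1 S a * (1 - p) := by
  have hrest : ∀ i ∈ S, i ≠ a ∧ i ≠ b →
      oa p 1 S i * log (oa p 1 S i / oa p (swap a b) S i) = 0 := fun i _ ⟨hia, hib⟩ => by
    rw [oa_swap_of_covBy p S hab fun j _ => ⟨fun h => hia h.1, fun h => hib h.1⟩,
      log_div_self, mul_zero]
  rw [dS, sum_eq_add_of_mem a b ha hb hab.lt.ne hrest, oa_swap_of_mem p S ha hb,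
    oa_swap_of_mem p S ha hb, swap_apply_left, swap_apply_right, oa_one_of_covBy p S hab ha hb]
  exact mul_log_div_add_mul_log_div_mul _ _

theorem dS_swap_of_covBy_of_not_mem (hab : a ⋖ b) (h : ¬(a ∈ S ∧ b ∈ S)) :
    dS p S (swap a b) = 0 := by
  refine dS_eq_zero_of_forall_oa_eq p fun i hi => oa_swap_of_covBy p S hab fun j hj => ?_
  exact ⟨fun ⟨hia, hjb⟩ => h ⟨hia ▸ hi, hjb ▸ hj⟩, fun ⟨hib, hja⟩ => h ⟨hja ▸ hj, hib ▸ hi⟩⟩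

end KullbackLeibler

theorem adjSwap_eq_swap {K m : ℕ} (hm : m + 1 < K) :
    adjSwap K m = swap ⟨m, Nat.lt_of_succ_lt hm⟩ ⟨m + 1, hm⟩ :=
  dif_pos hm

theorem Fin.mk_covBy_mk_add_one {K m : ℕ} (hm : m + 1 < K) :
    (⟨m, Nat.lt_of_succ_lt hm⟩ : Fin K) ⋖ ⟨m + 1, hm⟩ :=
  ⟨Fin.mk_lt_mk.mpr m.lt_succ_self, fun c h₁ h₂ => by
    rw [Fin.lt_def] at h₁ h₂
    simp only at h₁ h₂
    omega⟩

theorem stmt6_general (p : ℝ) (K : ℕ)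
    (S : Finset (Fin K)) (m : ℕ) (hm : m + 1 < K) :
    (((⟨m, Nat.lt_of_succ_lt hm⟩ : Fin K) ∈ S ∧ (⟨m + 1, hm⟩ : Fin K) ∈ S) →
      dS p S (adjSwap K m)
        = Real.log (1 / p) * p ^ ((S.filter fun j : Fin K => (j : ℕ) ≤ m).card - 1)
            * (1 - p) ^ 2 / (1 - p ^ S.card))
    ∧ (¬((⟨m, Nat.lt_of_succ_lt hm⟩ : Fin K) ∈ S ∧ (⟨m + 1, hm⟩ : Fin K) ∈ S) →
      dS p S (adjSwap K m) = 0) := by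
  rw [adjSwap_eq_swap hm]
  refine ⟨fun ⟨ha, hb⟩ => ?_, dS_swap_of_covBy_of_not_mem p (Fin.mk_covBy_mk_add_one hm)⟩
  have hrank : (S.filter fun j : Fin K => (j : ℕ) ≤ m) =
      S.filter (· ≤ (⟨m, Nat.lt_of_succ_lt hm⟩ : Fin K)) :=
    filter_congr fun _ _ => Iff.rfl
  rw [dS_swap_of_covBy_of_mem p (Fin.mk_covBy_mk_add_one hm) ha hb, oa_one, hrank]
  ring

/-- Lemma EC.5: closed form of `d_S(σ̂_m)`.  If both `m` and `m+1` belong to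
`S` then `d_S(σ̂_m) = log(1/p)·p^{i−1}·(1−p)²/(1−p^{|S|})` with
`i = |{j ∈ S : j ≤ m}|`; otherwise `d_S(σ̂_m) = 0`.  (Items are 0-indexed.) -/
theorem stmt6 (p : ℝ) (hp0 : 0 < p) (hp1 : p < 1) (K : ℕ) (hK : 2 ≤ K)
    (S : Finset (Fin K)) (hS : 2 ≤ S.card) (m : ℕ) (hm : m + 1 < K) :
    (((⟨m, Nat.lt_of_succ_lt hm⟩ : Fin K) ∈ S ∧ (⟨m + 1, hm⟩ : Fin K) ∈ S) →
      dS p S (adjSwap K m)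
        = Real.log (1 / p) * p ^ ((S.filter fun j : Fin K => (j : ℕ) ≤ m).card - 1)
            * (1 - p) ^ 2 / (1 - p ^ S.card))
    ∧ (¬((⟨m, Nat.lt_of_succ_lt hm⟩ : Fin K) ∈ S ∧ (⟨m + 1, hm⟩ : Fin K) ∈ S) →
      dS p S (adjSwap K m) = 0) :=
  stmt6_general p K S m hm
end

section
/- Fix a real p ∈ (0,1) and an integer K ≥ 2, and let 𝒮 be the collection of subsets of {1,…,K} of size at least 2. Define λ* : 𝒮 → ℝ by λ*({n, n+1, …, K}) = (1−p^{K−n+1})/(K−1+p) for each n ∈ {2,…,K−1}, λ*({1,…,K}) = (1−p^K)/((1−p)·(K−1+p)), and λ*(S) = 0 for all other S ∈ 𝒮. Then λ*(S) ≥ 0 for all S ∈ 𝒮, Σ_{S∈𝒮} λ*(S) = 1, and for every m ∈ {1,…,K−1}: Σ_{S∈𝒮} λ*(S)·d_S(σ̂_m) = log(1/p)·(1−p)/(K−1+p). -/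
/-- The nested "tail" display set `{n, n+1, …, K−1}` (0-indexed). -/
def tailSet (K : ℕ) (n : ℕ) : Finset (Fin K) :=
  Finset.univ.filter fun j : Fin K => n ≤ (j : ℕ)

/-- The optimal nested allocation `λ*`: `λ*(tail n) = (1−p^{K−n})/(K−1+p)` for
`n ∈ {1,…,K−2}`, `λ*(full set) = (1−p^K)/((1−p)(K−1+p))`, and `λ* = 0`
elsewhere. -/
noncomputable def lamStar (p : ℝ) (K : ℕ) (S : Finset (Fin K)) : ℝ :=
  (if S = tailSet K 0 then (1 - p ^ K) / ((1 - p) * ((K : ℝ) - 1 + p)) else 0)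
  + ∑ n ∈ Finset.Icc 1 (K - 2),
      (if S = tailSet K n then (1 - p ^ (K - n)) / ((K : ℝ) - 1 + p) else 0)

open Finset

section OrdinalAttraction

variable {K : ℕ} (p : ℝ)

theorem card_filter_perm_le {σ : Equiv.Perm (Fin K)} {S : Finset (Fin K)}
    (hS : ∀ x, σ x ∈ S ↔ x ∈ S) (i : Fin K) :
    (S.filter fun j => σ j ≤ σ i).card = (S.filter fun j => j ≤ σ i).card :=
  card_equiv σ fun j => by simp [hS]

theorem oa_eq_oa_one_apply {σ : Equiv.Perm (Fin K)} {S : Finset (Fin K)}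
    (hS : ∀ x, σ x ∈ S ↔ x ∈ S) (i : Fin K) : oa p σ S i = oa p 1 S (σ i) := by
  unfold oa
  rw [card_filter_perm_le hS]
  rfl

theorem mul_log_div_self (x : ℝ) : x * Real.log (x / x) = 0 := by
  rcases eq_or_ne x 0 with rfl | hx <;> simp [*]

theorem sub_mul_log_div_mul_self (x : ℝ) :
    (x - x * p) * Real.log (x / (x * p)) = x * (1 - p) * Real.log (1 / p) := by
  rcases eq_or_ne x 0 with rfl | hx
  · simp
  · rw [div_mul_cancel_left₀ hx, one_div]; ring

theorem dS_eq_zero_of_strictMonoOn {S : Finset (Fin K)} {σ : Equiv.Perm (Fin K)}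
    (h : StrictMonoOn σ S) : dS p S σ = 0 := by
  refine sum_eq_zero fun i hi => ?_
  have hoa : oa p σ S i = oa p 1 S i := by
    unfold oa
    rw [filter_congr fun j hj => h.le_iff_le hj hi]
    rfl
  rw [hoa, mul_log_div_self]

theorem dS_swap_of_mem {S : Finset (Fin K)} {a b : Fin K} (ha : a ∈ S) (hb : b ∈ S) :
    dS p S (Equiv.swap a b)
      = (oa p 1 S a - oa p 1 S b) * Real.log (oa p 1 S a / oa p 1 S b) := by
  rcases eq_or_ne a b with rfl | hab
  · rw [Equiv.swap_self, sub_self, zero_mul]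
    exact dS_eq_zero_of_strictMonoOn p (strictMono_id.strictMonoOn _)
  have hS : ∀ x, Equiv.swap a b x ∈ S ↔ x ∈ S := by
    intro x; rw [Equiv.swap_apply_def]; split_ifs <;> simp_all
  have hfix : ∀ x ∈ S, x ∉ ({a, b} : Finset (Fin K)) →
      oa p 1 S x * Real.log (oa p 1 S x / oa p (Equiv.swap a b) S x) = 0 := by
    intro x _ hx
    rw [mem_insert, mem_singleton, not_or] at hx
    rw [oa_eq_oa_one_apply p hS, Equiv.swap_apply_of_ne_of_ne hx.1 hx.2, mul_log_div_self]
  rw [dS, ← sum_subset (by simp [insert_subset_iff, ha, hb]) hfix, sum_pair hab,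
    oa_eq_oa_one_apply p hS, oa_eq_oa_one_apply p hS, Equiv.swap_apply_left,
    Equiv.swap_apply_right, ← inv_div (oa p 1 S a), Real.log_inv]
  ring

end OrdinalAttraction

section TailSets

variable {K n m : ℕ} (p : ℝ)

theorem mem_tailSet {j : Fin K} : j ∈ tailSet K n ↔ n ≤ (j : ℕ) := by
  simp [tailSet]

theorem card_tailSet (hn : n < K) : (tailSet K n).card = K - n := by
  have h : tailSet K n = Ici (⟨n, hn⟩ : Fin K) := by
    ext j; simp [tailSet, Fin.le_def]
  rw [h, Fin.card_Ici]

theorem oa_one_tailSet {i : Fin K} (hi : n ≤ (i : ℕ)) :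
    oa p 1 (tailSet K n) i = (1 - p) * p ^ ((i : ℕ) - n) / (1 - p ^ (K - n)) := by
  have hrank : (tailSet K n).filter (fun j => j ≤ i) = Finset.Icc (⟨n, by omega⟩ : Fin K) i := by
    ext j
    simp only [tailSet, mem_filter, mem_univ, true_and, Finset.mem_Icc, Fin.le_def]
  have hcard : ((tailSet K n).filter fun j => j ≤ i).card - 1 = (i : ℕ) - n := by
    rw [hrank, Fin.card_Icc]
    dsimp only
    omega
  unfold oa
  rw [card_tailSet (by omega), ← hcard]
  rfl

theorem adjSwap_of_lt (h : m + 1 < K) : adjSwap K m = Equiv.swap ⟨m, by omega⟩ ⟨m + 1, h⟩ :=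
  dif_pos h

theorem dS_tailSet_adjSwap (hnm : n ≤ m) (hm : m + 1 < K) :
    dS p (tailSet K n) (adjSwap K m)
      = Real.log (1 / p) * ((1 - p) ^ 2 * p ^ (m - n) / (1 - p ^ (K - n))) := by
  rw [adjSwap_of_lt hm, dS_swap_of_mem p (mem_tailSet.2 hnm) (mem_tailSet.2 (by simp; omega)),
    oa_one_tailSet p hnm, oa_one_tailSet p (by simp; omega)]
  simp only [show m + 1 - n = m - n + 1 by omega, pow_succ]
  rw [show (1 - p) * (p ^ (m - n) * p) / (1 - p ^ (K - n))
      = (1 - p) * p ^ (m - n) / (1 - p ^ (K - n)) * p by ring, sub_mul_log_div_mul_self]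
  ring

theorem dS_tailSet_adjSwap_of_lt (hmn : m < n) : dS p (tailSet K n) (adjSwap K m) = 0 := by
  refine dS_eq_zero_of_strictMonoOn p fun x hx y hy hxy => ?_
  rw [mem_coe, mem_tailSet] at hx hy
  unfold adjSwap
  split_ifs
  · simp only [Equiv.swap_apply_def, Fin.lt_def] at hxy ⊢
    split_ifs <;> simp_all [Fin.ext_iff] <;> omega
  · exact hxy

end TailSets

theorem sum_Icc_one_sub_eq_sum_range {M : Type*} [AddCommMonoid M] (f : ℕ → M) (k : ℕ) :
    ∑ n ∈ Icc 1 k, f (k - n) = ∑ j ∈ range k, f j := by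
  apply sum_nbij' (k - ·) (k - ·) <;> intro n hn <;> simp_all <;> omega

section NestedAllocation

variable {K : ℕ} (p : ℝ)

theorem lamStar_nonneg (hp0 : 0 ≤ p) (hp1 : p ≤ 1) (hK : 1 ≤ K) (S : Finset (Fin K)) :
    0 ≤ lamStar p K S := by
  have hD : 0 ≤ (K : ℝ) - 1 + p := by
    have : (1 : ℝ) ≤ K := by exact_mod_cast hK
    linarith
  have hpow : ∀ k, 0 ≤ 1 - p ^ k := fun k => sub_nonneg.2 (pow_le_one₀ hp0 hp1)
  refine add_nonneg ?_ (sum_nonneg fun n _ => ?_) <;> split_ifs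
  all_goals first | rfl | exact div_nonneg (hpow _) (by nlinarith)

theorem sum_lamStar_mul (hK : 2 ≤ K) (f : Finset (Fin K) → ℝ) :
    ∑ S ∈ univ.filter (fun S : Finset (Fin K) => 2 ≤ S.card), lamStar p K S * f S
      = (1 - p ^ K) / ((1 - p) * ((K : ℝ) - 1 + p)) * f (tailSet K 0)
        + ∑ n ∈ Icc 1 (K - 2), (1 - p ^ (K - n)) / ((K : ℝ) - 1 + p) * f (tailSet K n) := by
  have hcard : ∀ n ≤ K - 2, 2 ≤ (tailSet K n).card := fun n hn => by
    rw [card_tailSet (by omega)]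
    omega
  simp only [lamStar, add_mul, sum_mul, ite_mul, zero_mul, sum_add_distrib]
  rw [sum_comm]
  simp only [sum_ite_eq', mem_filter, mem_univ, true_and, if_pos (hcard 0 (Nat.zero_le _))]
  exact congrArg _ (sum_congr rfl fun n hn => if_pos (hcard n (mem_Icc.1 hn).2))

theorem sum_lamStar (hp1 : p ≠ 1) (hK : 2 ≤ K) (hD : (K : ℝ) - 1 + p ≠ 0) :
    ∑ S ∈ univ.filter (fun S : Finset (Fin K) => 2 ≤ S.card), lamStar p K S = 1 := by
  have h := sum_lamStar_mul p hK fun _ => 1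
  simp only [mul_one] at h
  rw [h]
  obtain ⟨k, rfl⟩ := Nat.exists_eq_add_of_le' hK
  have htail : ∑ n ∈ Icc 1 k, (1 - p ^ (k + 2 - n)) = ∑ j ∈ range k, (1 - p ^ (j + 2)) := by
    rw [← sum_Icc_one_sub_eq_sum_range]
    refine sum_congr rfl fun n hn => ?_
    rw [mem_Icc] at hn
    rw [show k + 2 - n = k - n + 2 by omega]
  have hfull : 1 - p ^ (k + 2) = (1 - p) * (∑ j ∈ range k, p ^ (j + 2) + p + 1) := by
    rw [← mul_neg_geom_sum, sum_range_succ', sum_range_succ']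
    simp
  have hp1' : 1 - p ≠ 0 := sub_ne_zero.2 hp1.symm
  rw [Nat.add_sub_cancel, ← sum_div, htail, hfull, sum_sub_distrib, sum_const, card_range,
    nsmul_eq_mul, mul_one]
  push_cast at hD ⊢
  field_simp
  ring

theorem sum_lamStar_mul_dS_adjSwap (hp0 : 0 < p) (hp1 : p < 1) {m : ℕ} (hm : m + 1 < K) :
    ∑ S ∈ univ.filter (fun S : Finset (Fin K) => 2 ≤ S.card),
        lamStar p K S * dS p S (adjSwap K m)
      = Real.log (1 / p) * (1 - p) / ((K : ℝ) - 1 + p) := by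
  have hD : (K : ℝ) - 1 + p ≠ 0 := by
    have : (2 : ℝ) ≤ K := by exact_mod_cast (by omega : 2 ≤ K)
    linarith
  have hpow : ∀ k ≠ 0, 1 - p ^ k ≠ 0 := fun k hk =>
    (sub_pos.2 (pow_lt_one₀ hp0.le hp1 hk)).ne'
  have htail : ∑ n ∈ Icc 1 (K - 2),
        (1 - p ^ (K - n)) / ((K : ℝ) - 1 + p) * dS p (tailSet K n) (adjSwap K m)
      = Real.log (1 / p) * (1 - p) / ((K : ℝ) - 1 + p) * (1 - p ^ m) := by
    rw [← sum_subset (Icc_subset_Icc_right (by omega : m ≤ K - 2)) fun n hn hnm => by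
      rw [mem_Icc] at hn hnm
      rw [dS_tailSet_adjSwap_of_lt p (by omega), mul_zero]]
    calc _ = ∑ n ∈ Icc 1 m, Real.log (1 / p) * (1 - p) ^ 2 / ((K : ℝ) - 1 + p) * p ^ (m - n) :=
          sum_congr rfl fun n hn => by
            rw [mem_Icc] at hn
            rw [dS_tailSet_adjSwap p hn.2 hm]
            field_simp [hpow (K - n) (by omega)]
      _ = Real.log (1 / p) * (1 - p) / ((K : ℝ) - 1 + p) * ((1 - p) * ∑ j ∈ range m, p ^ j) := by
          rw [← mul_sum, sum_Icc_one_sub_eq_sum_range (p ^ ·)]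
          ring
      _ = _ := by rw [mul_neg_geom_sum]
  rw [sum_lamStar_mul p (by omega), htail, dS_tailSet_adjSwap p (Nat.zero_le m) hm]
  simp only [Nat.sub_zero]
  field_simp [hpow K (by omega : K ≠ 0), (sub_pos.2 hp1).ne']
  ring

end NestedAllocation

/-- Primal feasibility (Lemma EC.6): `λ*` is a nonnegative probability
allocation on the display sets of size `≥ 2`, and for every adjacent
transposition `σ̂_m` one has
`∑_S λ*(S)·d_S(σ̂_m) = log(1/p)·(1−p)/(K−1+p)`. -/
theorem stmt7 (p : ℝ) (hp0 : 0 < p) (hp1 : p < 1) (K : ℕ) (hK : 2 ≤ K) :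
    (∀ S : Finset (Fin K), 2 ≤ S.card → 0 ≤ lamStar p K S)
    ∧ (∑ S ∈ Finset.univ.filter (fun S : Finset (Fin K) => 2 ≤ S.card),
        lamStar p K S) = 1
    ∧ ∀ m : ℕ, m + 1 < K →
        (∑ S ∈ Finset.univ.filter (fun S : Finset (Fin K) => 2 ≤ S.card),
            lamStar p K S * dS p S (adjSwap K m))
          = Real.log (1 / p) * (1 - p) / ((K : ℝ) - 1 + p) := by
  have hD : (K : ℝ) - 1 + p ≠ 0 := by
    have : (2 : ℝ) ≤ K := by exact_mod_cast hK
    linarith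
  exact ⟨fun S _ => lamStar_nonneg p hp0.le hp1.le (by omega) S,
    sum_lamStar p hp1.ne hK hD, fun m hm => sum_lamStar_mul_dS_adjSwap p hp0 hp1 hm⟩
end

section
/- Fix a real p ∈ (0,1) and an integer K ≥ 2. For every permutation σ of {1,…,K} with σ ≠ id, there exists m ∈ {1,…,K−1} such that d_S(σ) ≥ d_S(σ̂_m) for every subset S ⊆ {1,…,K} with |S| ≥ 2. -/
/-! Write `r_σ(i)` for the rank of `i` in `S` under `σ` and `f(i) = f_id(i|S)`. Since
`log f_σ(i|S)` is affine in `r_σ(i)` with slope `log p < 0`, we get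
`d_S(σ) = log p · Σ_{i∈S} f(i) (r_id(i) − r_σ(i))`, so `d_S(σ)` increases with the weighted
rank sum `W(σ) = Σ_{i∈S} f(i) r_σ(i)`. Counting `W(σ)` over ordered pairs, a pair `i < j` of `S`
contributes `f(i)` if `σ` inverts it and `f(j) ≤ f(i)` otherwise, so `W`, and with it `d_S`, is
monotone in the set of inversions of `σ`. A non-identity `σ` has a descent at some adjacent pair
`(m, m+1)`, and that pair is the only inversion of `σ̂_m`. -/

open Finset

def rankIn {α : Type*} [LinearOrder α] (σ : Equiv.Perm α) (S : Finset α) (i : α) : ℕ :=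
  #{j ∈ S | σ j ≤ σ i}

section Ranks

variable {α : Type*} [LinearOrder α]

theorem one_le_rankIn (σ : Equiv.Perm α) {S : Finset α} {i : α} (hi : i ∈ S) :
    1 ≤ rankIn σ S i :=
  card_pos.mpr ⟨i, mem_filter.mpr ⟨hi, le_rfl⟩⟩

theorem rankIn_one_mono (S : Finset α) : Monotone (rankIn 1 S) := fun _ _ huv =>
  card_le_card fun _ hj => by
    rw [mem_filter] at hj ⊢
    exact ⟨hj.1, hj.2.trans huv⟩

theorem sum_mul_rankIn_eq (f : α → ℝ) (σ : Equiv.Perm α) (S : Finset α) :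
    ∑ i ∈ S, f i * rankIn σ S i = ∑ i ∈ S, ∑ j ∈ S, if σ j ≤ σ i then f i else 0 := by
  refine sum_congr rfl fun i _ => ?_
  rw [rankIn, card_filter, Nat.cast_sum, mul_sum]
  simp only [Nat.cast_ite, Nat.cast_one, Nat.cast_zero, mul_ite, mul_one, mul_zero]

theorem ite_add_ite_le_of_inversions_subset {f : α → ℝ} (hf : Antitone f)
    {σ τ : Equiv.Perm α} (hinv : ∀ u v, u < v → τ v < τ u → σ v < σ u) (i j : α) :
    (if τ j ≤ τ i then f i else 0) + (if τ i ≤ τ j then f j else 0) ≤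
      (if σ j ≤ σ i then f i else 0) + (if σ i ≤ σ j then f j else 0) := by
  wlog hij : i ≤ j generalizing i j
  · simpa only [add_comm] using this j i (le_of_not_ge hij)
  rcases hij.eq_or_lt with rfl | hij
  · simp
  have hfij := hf hij.le
  have hσ : σ i ≠ σ j := σ.injective.ne hij.ne
  have hτ : τ i ≠ τ j := τ.injective.ne hij.ne
  rcases lt_or_gt_of_ne hτ with hτij | hτji
  · split_ifs <;> first | linarith | order
  · have := hinv i j hij hτji
    split_ifs <;> first | linarith | order

theorem sum_mul_rankIn_le_of_inversions_subset {f : α → ℝ} (hf : Antitone f)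
    {σ τ : Equiv.Perm α} (hinv : ∀ u v, u < v → τ v < τ u → σ v < σ u) (S : Finset α) :
    ∑ i ∈ S, f i * rankIn τ S i ≤ ∑ i ∈ S, f i * rankIn σ S i := by
  have hpairs (π : Equiv.Perm α) : 2 * ∑ i ∈ S, f i * rankIn π S i =
      ∑ i ∈ S, ∑ j ∈ S, ((if π j ≤ π i then f i else 0) + (if π i ≤ π j then f j else 0)) := by
    simp only [sum_add_distrib, sum_mul_rankIn_eq]
    rw [two_mul, sum_comm (f := fun i j => if π i ≤ π j then f j else 0)]
  have := sum_le_sum fun i (_ : i ∈ S) => sum_le_sum fun j (_ : j ∈ S) =>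
    ite_add_ite_le_of_inversions_subset hf hinv i j
  linarith [hpairs σ, hpairs τ]

end Ranks

section OrdinalAttraction

variable {K : ℕ} {p : ℝ} {S : Finset (Fin K)}

theorem oa_eq (σ : Equiv.Perm (Fin K)) (i : Fin K) :
    oa p σ S i = (1 - p) * p ^ (rankIn σ S i - 1) / (1 - p ^ #S) := rfl

theorem antitone_oa_one (hp0 : 0 ≤ p) (hp1 : p ≤ 1) : Antitone (oa p 1 S) := fun u v huv => by
  rw [oa_eq, oa_eq]
  refine div_le_div_of_nonneg_right (mul_le_mul_of_nonneg_left ?_ (sub_nonneg.mpr hp1))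
    (sub_nonneg.mpr (pow_le_one₀ hp0 hp1))
  exact pow_le_pow_of_le_one hp0 hp1 (Nat.sub_le_sub_right (rankIn_one_mono S huv) 1)

theorem oa_pos (hp0 : 0 < p) (hp1 : p < 1) (σ : Equiv.Perm (Fin K)) {i : Fin K} (hi : i ∈ S) :
    0 < oa p σ S i :=
  div_pos (mul_pos (sub_pos.mpr hp1) (pow_pos hp0 _))
    (sub_pos.mpr (pow_lt_one₀ hp0.le hp1 (card_ne_zero_of_mem hi)))

theorem log_oa (hp0 : 0 < p) (hp1 : p < 1) (σ : Equiv.Perm (Fin K)) {i : Fin K} (hi : i ∈ S) :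
    Real.log (oa p σ S i) =
      Real.log (1 - p) + ((rankIn σ S i : ℝ) - 1) * Real.log p - Real.log (1 - p ^ #S) := by
  have hden : 0 < 1 - p ^ #S := sub_pos.mpr (pow_lt_one₀ hp0.le hp1 (card_ne_zero_of_mem hi))
  rw [oa_eq, Real.log_div (mul_pos (sub_pos.mpr hp1) (pow_pos hp0 _)).ne' hden.ne',
    Real.log_mul (sub_pos.mpr hp1).ne' (pow_pos hp0 _).ne', Real.log_pow,
    Nat.cast_sub (one_le_rankIn σ hi), Nat.cast_one]

theorem dS_eq (hp0 : 0 < p) (hp1 : p < 1) (σ : Equiv.Perm (Fin K)) :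
    dS p S σ = Real.log p *
      (∑ i ∈ S, oa p 1 S i * rankIn 1 S i - ∑ i ∈ S, oa p 1 S i * rankIn σ S i) := by
  rw [dS, ← sum_sub_distrib, mul_sum]
  refine sum_congr rfl fun i hi => ?_
  rw [Real.log_div (oa_pos hp0 hp1 1 hi).ne' (oa_pos hp0 hp1 σ hi).ne', log_oa hp0 hp1 1 hi, log_oa hp0 hp1 σ hi]
  ring

theorem dS_le_dS_of_inversions_subset (hp0 : 0 < p) (hp1 : p < 1) {σ τ : Equiv.Perm (Fin K)}
    (hinv : ∀ u v, u < v → τ v < τ u → σ v < σ u) : dS p S τ ≤ dS p S σ := by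
  rw [dS_eq hp0 hp1, dS_eq hp0 hp1]
  have hW := sum_mul_rankIn_le_of_inversions_subset (antitone_oa_one (S := S) hp0.le hp1.le) hinv S
  exact mul_le_mul_of_nonpos_left (by linarith) (Real.log_neg hp0 hp1).le

end OrdinalAttraction

theorem exists_descent_of_ne_one {K : ℕ} {σ : Equiv.Perm (Fin K)} (hσ : σ ≠ 1) :
    ∃ m : ℕ, ∃ h : m + 1 < K, σ ⟨m + 1, h⟩ < σ ⟨m, Nat.lt_of_succ_lt h⟩ := by
  by_contra! hmono
  apply hσ
  cases K with
  | zero => exact Subsingleton.elim _ _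
  | succ n =>
    have : StrictMono σ := Fin.strictMono_iff_lt_succ.mpr fun i =>
      (hmono i (Nat.succ_lt_succ i.isLt)).lt_of_ne (σ.injective.ne (Fin.castSucc_lt_succ).ne)
    exact Equiv.ext (congrFun this.eq_id)

theorem adjSwap_inversion_eq {K m : ℕ} (h : m + 1 < K) {u v : Fin K} (huv : u < v)
    (hvu : adjSwap K m v < adjSwap K m u) :
    u = ⟨m, Nat.lt_of_succ_lt h⟩ ∧ v = ⟨m + 1, h⟩ := by
  simp only [adjSwap, dif_pos h, Equiv.swap_apply_def] at hvu
  split_ifs at hvu <;> simp only [Fin.ext_iff, Fin.lt_def] at * <;> omega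

theorem stmt9_general (p : ℝ) (hp0 : 0 < p) (hp1 : p < 1) (K : ℕ)
    (σ : Equiv.Perm (Fin K)) (hσ : σ ≠ 1) :
    ∃ m : ℕ, m + 1 < K ∧
      ∀ S : Finset (Fin K), 2 ≤ S.card → dS p S (adjSwap K m) ≤ dS p S σ := by
  obtain ⟨m, h, hdesc⟩ := exists_descent_of_ne_one hσ
  refine ⟨m, h, fun S _ => dS_le_dS_of_inversions_subset hp0 hp1 fun u v huv hvu => ?_⟩
  obtain ⟨rfl, rfl⟩ := adjSwap_inversion_eq h huv hvu
  exact hdesc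

/-- Dominance lemma (Lemma EC.9): for every non-identity permutation `σ` there
is an adjacent transposition `σ̂_m` with `d_S(σ̂_m) ≤ d_S(σ)` for all display
sets `S` of size `≥ 2`. -/
theorem stmt9 (p : ℝ) (hp0 : 0 < p) (hp1 : p < 1) (K : ℕ) (hK : 2 ≤ K)
    (σ : Equiv.Perm (Fin K)) (hσ : σ ≠ 1) :
    ∃ m : ℕ, m + 1 < K ∧
      ∀ S : Finset (Fin K), 2 ≤ S.card → dS p S (adjSwap K m) ≤ dS p S σ :=
  stmt9_general p hp0 hp1 K σ hσ
end

section
/- Fix a real p ∈ (0,1) and an integer K ≥ 2, and let 𝒮 be the collection of subsets of {1,…,K} of size at least 2. Define λ* : 𝒮 → ℝ by λ*({n, n+1, …, K}) = (1−p^{K−n+1})/(K−1+p) for each n ∈ {2,…,K−1}, λ*({1,…,K}) = (1−p^K)/((1−p)·(K−1+p)), and λ*(S) = 0 for all other S ∈ 𝒮. Then the minimum over permutations σ ≠ id of {1,…,K} of Σ_{S∈𝒮} λ*(S)·d_S(σ) equals log(1/p)·(1−p)/(K−1+p); in particular, the nested allocation λ* attains the supremum in the full-ranking max-min problem over OA alternatives.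 -/
/-!
The divergence `d_S(σ)` is `log (1/p) · (1 - p) / (1 - p ^ |S|)` times a sum over the pairs
`j < i` of `S` inverted by `σ`, each contributing the gap `p ^ (r j - 1) - p ^ (r i - 1)` between
the identity-OA weights of `j` and `i` (`r` is the rank within `S`). Under `λ*` only the tail sets
`{n, …, K - 1}` carry weight, and the normalisations cancel so that an inverted adjacent pair
`(i, i + 1)` alone contributes
`log (1/p) / (K - 1 + p) · ((1 - p) p ^ i + (1 - p) ∑_{n=1}^{i} (1 - p) p ^ (i - n))`, which
telescopes to `log (1/p) (1 - p) / (K - 1 + p)` whatever `i` is. Every `σ ≠ 1` inverts some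
adjacent pair, and an adjacent transposition inverts nothing else, so this is the minimum.

For an arbitrary allocation `λ`, weight the `K - 1` adjacent transpositions by `1, …, 1, 1 + p`
(total `K - 1 + p`). On a display set `S` the adjacent pairs lying in `S` have distinct ranks
there, and the top pair, if present, has rank `|S| - 1`; so their weighted gaps are dominated by
the geometric series `(1 - p) ∑_{t < |S|} p ^ t = 1 - p ^ |S|`, and the weighted divergence is at
most `log (1/p) (1 - p)`. Averaging over `λ`, some adjacent transposition has `λ`-value at most
`log (1/p) (1 - p) / (K - 1 + p)`.
-/

open Finset

namespace OrdinalAttraction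

section Rank

variable {α : Type*} [LinearOrder α] {S : Finset α} {σ : Equiv.Perm α} {a b i : α}

def rank (S : Finset α) (σ : Equiv.Perm α) (i : α) : ℕ := #{j ∈ S | σ j ≤ σ i}

def inversionSum (S : Finset α) (σ : Equiv.Perm α) (f : α → ℝ) : ℝ :=
  ∑ i ∈ S, ∑ j ∈ S, if j < i ∧ σ i < σ j then f j - f i else 0

lemma rank_one : rank S 1 i = #{j ∈ S | j ≤ i} := rfl

lemma one_le_rank (hi : i ∈ S) : 1 ≤ rank S σ i :=
  card_pos.2 ⟨i, mem_filter.2 ⟨hi, le_rfl⟩⟩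

lemma rank_le_card : rank S σ i ≤ #S := card_filter_le _ _

lemma rank_le_rank (hab : σ a ≤ σ b) : rank S σ a ≤ rank S σ b :=
  card_le_card (monotone_filter_right _ fun _ _ hj => hj.trans hab)

lemma rank_lt_rank (hb : b ∈ S) (hab : σ a < σ b) : rank S σ a < rank S σ b := by
  refine card_lt_card ⟨monotone_filter_right _ fun _ _ hj => hj.trans hab.le, fun h => ?_⟩
  exact (mem_filter.1 (h (mem_filter.2 ⟨hb, le_rfl⟩))).2.not_gt hab

lemma rank_one_of_covBy (hb : b ∈ S) (hab : a ⋖ b) : rank S 1 b = rank S 1 a + 1 := by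
  have : {j ∈ S | j ≤ b} = insert b {j ∈ S | j ≤ a} := by
    ext j
    simp only [mem_filter, mem_insert]
    constructor
    · rintro ⟨hj, hjb⟩
      rcases hjb.lt_or_eq with h | rfl
      · exact Or.inr ⟨hj, hab.le_of_lt h⟩
      · exact Or.inl rfl
    · rintro (rfl | ⟨hj, hja⟩)
      · exact ⟨hb, le_rfl⟩
      · exact ⟨hj, hja.trans hab.le⟩
  rw [rank_one, rank_one, this, card_insert_of_notMem]
  simp [hab.lt.not_ge]

lemma rank_one_eq_card (htop : ∀ x ∈ S, x ≤ b) : rank S 1 b = #S := by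
  rw [rank, filter_true_of_mem]
  simpa using htop

lemma boole_le_sub_boole_le (σ : Equiv.Perm α) (i j : α) :
    ((if σ j ≤ σ i then 1 else 0) - (if j ≤ i then 1 else 0) : ℝ)
      = (if i < j ∧ σ j < σ i then 1 else 0) - (if j < i ∧ σ i < σ j then 1 else 0) := by
  have := σ.injective.eq_iff (a := i) (b := j)
  split_ifs <;> grind

lemma sum_mul_rank_sub_rank (f : α → ℝ) :
    ∑ i ∈ S, f i * ((rank S σ i : ℝ) - rank S 1 i) = inversionSum S σ f := by
  have hcount : ∀ i, ((rank S σ i : ℝ) - rank S 1 i) = ∑ j ∈ S,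
      ((if i < j ∧ σ j < σ i then 1 else 0) - (if j < i ∧ σ i < σ j then 1 else 0)) := fun i => by
    rw [rank, rank_one, natCast_card_filter, natCast_card_filter, ← sum_sub_distrib]
    exact sum_congr rfl fun j _ => boole_le_sub_boole_le σ i j
  simp_rw [hcount, mul_sum, mul_sub, sum_sub_distrib]
  rw [sum_comm, inversionSum, ← sum_sub_distrib]
  refine sum_congr rfl fun i _ => ?_
  rw [← sum_sub_distrib]
  refine sum_congr rfl fun j _ => ?_
  split_ifs <;> simp

variable {f : α → ℝ}

lemma inversionSum_term_nonneg (hf : AntitoneOn f S) {j : α} (hi : i ∈ S) (hj : j ∈ S) :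
    0 ≤ if j < i ∧ σ i < σ j then f j - f i else 0 := by
  split_ifs with h
  · exact sub_nonneg.2 (hf hj hi h.1.le)
  · exact le_rfl

lemma inversionSum_nonneg (hf : AntitoneOn f S) : 0 ≤ inversionSum S σ f :=
  sum_nonneg fun _ hi => sum_nonneg fun _ hj => inversionSum_term_nonneg hf hi hj

lemma sub_le_inversionSum (hf : AntitoneOn f S) (ha : a ∈ S) (hb : b ∈ S) (hab : a < b)
    (hσ : σ b < σ a) : f a - f b ≤ inversionSum S σ f :=
  calc f a - f b = if a < b ∧ σ b < σ a then f a - f b else 0 := (if_pos ⟨hab, hσ⟩).symm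
    _ ≤ ∑ j ∈ S, if j < b ∧ σ b < σ j then f j - f b else 0 :=
      single_le_sum (f := fun j => if j < b ∧ σ b < σ j then f j - f b else 0)
        (fun _ hj => inversionSum_term_nonneg hf hb hj) ha
    _ ≤ inversionSum S σ f :=
      single_le_sum (fun _ hi => sum_nonneg fun _ hj => inversionSum_term_nonneg hf hi hj) hb

lemma swap_lt_swap_iff_of_covBy (hab : a ⋖ b) {j : α} :
    j < i ∧ Equiv.swap a b i < Equiv.swap a b j ↔ i = b ∧ j = a := by
  have := hab.1
  have := hab.2
  rw [Equiv.swap_apply_def, Equiv.swap_apply_def]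
  split_ifs <;> grind

lemma inversionSum_swap_of_covBy (hab : a ⋖ b) :
    inversionSum S (Equiv.swap a b) f = if a ∈ S ∧ b ∈ S then f a - f b else 0 := by
  simp only [inversionSum, swap_lt_swap_iff_of_covBy hab, ite_and]
  by_cases a ∈ S <;> simp [*]

lemma swap_ne_one_of_covBy (hab : a ⋖ b) : Equiv.swap a b ≠ 1 := by
  rw [Ne, Equiv.swap_eq_one_iff]
  exact hab.lt.ne

lemma exists_covBy_lt_of_ne_one [LocallyFiniteOrder α] [WellFoundedLT α] (hσ : σ ≠ 1) :
    ∃ a b, a ⋖ b ∧ σ b < σ a := by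
  by_contra! h
  have hmono : StrictMono σ :=
    ((monotone_iff_forall_covBy σ).2 h).strictMono_of_injective σ.injective
  have := Subsingleton.elim (hmono.orderIsoOfSurjective σ σ.surjective) (OrderIso.refl α)
  exact hσ (Equiv.ext fun x => DFunLike.congr_fun this x)

end Rank

section Divergence

variable {p : ℝ}

noncomputable def oaWeight {α : Type*} [LinearOrder α] (p : ℝ) (S : Finset α) (i : α) : ℝ :=
  p ^ (rank S 1 i - 1)

lemma oaWeight_antitoneOn {α : Type*} [LinearOrder α] {S : Finset α} (hp0 : 0 ≤ p)
    (hp1 : p ≤ 1) : AntitoneOn (oaWeight p S) S :=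
  fun _ _ _ _ hij => pow_le_pow_of_le_one hp0 hp1 (Nat.sub_le_sub_right (rank_le_rank hij) 1)

variable {K : ℕ} {S : Finset (Fin K)} {σ : Equiv.Perm (Fin K)} {i : Fin K}

lemma oa_eq (p : ℝ) (σ : Equiv.Perm (Fin K)) (S : Finset (Fin K)) (i : Fin K) :
    oa p σ S i = (1 - p) * p ^ (rank S σ i - 1) / (1 - p ^ #S) := rfl

lemma log_oa_div_oa (hp0 : 0 < p) (hp1 : p ≠ 1) (hi : i ∈ S) :
    Real.log (oa p 1 S i / oa p σ S i) = Real.log (1 / p) * ((rank S σ i : ℝ) - rank S 1 i) := by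
  have hS : 1 - p ^ #S ≠ 0 :=
    sub_ne_zero.2 ((pow_eq_one_iff_of_nonneg hp0.le (card_ne_zero_of_mem hi)).not.2 hp1 |> Ne.symm)
  rw [oa_eq, oa_eq, div_div_div_cancel_right₀ hS, mul_div_mul_left _ _ (sub_ne_zero.2 hp1.symm),
    Real.log_div (by positivity) (by positivity), Real.log_pow, Real.log_pow,
    Nat.cast_sub (one_le_rank hi), Nat.cast_sub (one_le_rank hi), one_div, Real.log_inv]
  ring

theorem dS_eq_inversionSum (hp0 : 0 < p) (hp1 : p ≠ 1) (S : Finset (Fin K))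
    (σ : Equiv.Perm (Fin K)) :
    dS p S σ = Real.log (1 / p) * ((1 - p) / (1 - p ^ #S)) * inversionSum S σ (oaWeight p S) := by
  rw [← sum_mul_rank_sub_rank, mul_sum, dS]
  refine sum_congr rfl fun i hi => ?_
  rw [log_oa_div_oa hp0 hp1 hi, oa_eq, oaWeight]
  ring

lemma dS_nonneg (hp0 : 0 < p) (hp1 : p < 1) (S : Finset (Fin K)) (σ : Equiv.Perm (Fin K)) :
    0 ≤ dS p S σ := by
  rw [dS_eq_inversionSum hp0 hp1.ne]
  have := Real.log_nonneg (one_le_one_div hp0 hp1.le)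
  have := inversionSum_nonneg (σ := σ) (oaWeight_antitoneOn (S := S) hp0.le hp1.le)
  have : p ^ #S ≤ 1 := pow_le_one₀ hp0.le hp1.le
  have : 0 ≤ 1 - p := by linarith
  positivity

end Divergence

section Tail

variable {K n : ℕ} {p : ℝ}

lemma mem_tailSet {i : Fin K} : i ∈ tailSet K n ↔ n ≤ i := by
  simp [tailSet]

lemma card_tailSet : #(tailSet K n) = K - n := by
  have := card_filter_add_card_filter_not (s := univ) fun i : Fin K => (i : ℕ) < n
  simp only [Fin.card_filter_val_lt, not_lt, card_univ, Fintype.card_fin] at this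
  rw [tailSet]
  omega

lemma oaWeight_tailSet {i : Fin K} (hi : n ≤ i) :
    oaWeight p (tailSet K n) i = p ^ ((i : ℕ) - n) := by
  have : (tailSet K n).filter (· ≤ i) = Icc ⟨n, hi.trans_lt i.isLt⟩ i :=
    Finset.ext fun j => by rw [mem_filter, mem_tailSet, mem_Icc, Fin.le_def, Fin.le_def]
  rw [oaWeight, rank_one, this, Fin.card_Icc]
  congr 1
  simp only
  omega

lemma one_sub_mul_sum_Icc_pow (p : ℝ) (i : ℕ) :
    (1 - p) * ∑ n ∈ Icc 1 i, p ^ (i - n) = 1 - p ^ i := by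
  rw [← Ico_add_one_right_eq_Icc, sum_Ico_reflect _ _ le_rfl]
  simpa using mul_neg_geom_sum p i

noncomputable def tailInversionSum (p : ℝ) (K n : ℕ) (σ : Equiv.Perm (Fin K)) : ℝ :=
  inversionSum (tailSet K n) σ (oaWeight p (tailSet K n))

noncomputable def adjacentGap (p : ℝ) (i n : ℕ) : ℝ :=
  if n ≤ i then (1 - p) * p ^ (i - n) else 0

variable {a b : Fin K}

lemma val_eq_of_covBy (hab : a ⋖ b) : (b : ℕ) = a + 1 := by
  simpa [eq_comm] using Fin.covBy_iff.1 hab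

lemma oaWeight_tailSet_sub (hab : a ⋖ b) (hn : n ≤ a) :
    oaWeight p (tailSet K n) a - oaWeight p (tailSet K n) b = adjacentGap p a n := by
  have hb := val_eq_of_covBy hab
  rw [adjacentGap, if_pos hn, oaWeight_tailSet hn, oaWeight_tailSet (by omega),
    hb, Nat.sub_add_comm hn, pow_succ]
  ring

lemma tailInversionSum_swap (hab : a ⋖ b) (n : ℕ) :
    tailInversionSum p K n (Equiv.swap a b) = adjacentGap p a n := by
  have hb := val_eq_of_covBy hab
  simp only [tailInversionSum, inversionSum_swap_of_covBy hab, mem_tailSet]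
  by_cases hn : n ≤ a
  · rw [if_pos ⟨hn, by omega⟩, oaWeight_tailSet_sub hab hn]
  · rw [if_neg fun h => hn h.1, adjacentGap, if_neg hn]

lemma adjacentGap_le_tailInversionSum (hp0 : 0 ≤ p) (hp1 : p ≤ 1) (hab : a ⋖ b)
    (hσ : σ b < σ a) (n : ℕ) : adjacentGap p a n ≤ tailInversionSum p K n σ := by
  have hb := val_eq_of_covBy hab
  by_cases hn : n ≤ a
  · rw [← oaWeight_tailSet_sub hab hn]
    exact sub_le_inversionSum (oaWeight_antitoneOn hp0 hp1) (mem_tailSet.2 hn)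
      (mem_tailSet.2 (by omega)) hab.lt hσ
  · rw [adjacentGap, if_neg hn]
    exact inversionSum_nonneg (oaWeight_antitoneOn hp0 hp1)

lemma adjacentGap_add_sum_adjacentGap (p : ℝ) {i : ℕ} (hi : i + 2 ≤ K) :
    adjacentGap p i 0 + (1 - p) * ∑ n ∈ Icc 1 (K - 2), adjacentGap p i n = 1 - p := by
  have : (Icc 1 (K - 2)).filter (· ≤ i) = Icc 1 i := by
    ext n
    simp only [mem_filter, mem_Icc]
    omega
  rw [adjacentGap, if_pos (Nat.zero_le _), Nat.sub_zero]
  unfold adjacentGap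
  rw [← sum_filter, this, ← mul_sum, one_sub_mul_sum_Icc_pow]
  ring

end Tail

section Allocation

variable {K : ℕ} {p : ℝ}

def displaySets (K : ℕ) : Finset (Finset (Fin K)) := univ.filter fun S => 2 ≤ #S

lemma displaySets_eq : displaySets K = univ.filter fun S => 2 ≤ S.card := rfl

lemma natCast_sub_one_add_pos (hp0 : 0 < p) (hK : 1 ≤ K) : (0 : ℝ) < K - 1 + p := by
  have : (1 : ℝ) ≤ K := by exact_mod_cast hK
  linarith

lemma sum_lamStar_mul (hK : 2 ≤ K) (g : Finset (Fin K) → ℝ) :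
    ∑ S ∈ displaySets K, lamStar p K S * g S
      = (1 - p ^ K) / ((1 - p) * ((K : ℝ) - 1 + p)) * g (tailSet K 0)
        + ∑ n ∈ Icc 1 (K - 2), (1 - p ^ (K - n)) / ((K : ℝ) - 1 + p) * g (tailSet K n) := by
  have hmem : ∀ n ≤ K - 2, tailSet K n ∈ displaySets K :=
    fun n hn => mem_filter.2 ⟨mem_univ _, by rw [card_tailSet]; omega⟩
  simp only [lamStar, add_mul, sum_mul, ite_mul, zero_mul]
  rw [sum_add_distrib, sum_comm, sum_ite_eq', if_pos (hmem 0 (Nat.zero_le _))]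
  congr 1
  refine sum_congr rfl fun n hn => ?_
  rw [sum_ite_eq', if_pos (hmem n (mem_Icc.1 hn).2)]

lemma lamStar_nonneg (hp0 : 0 < p) (hp1 : p < 1) (hK : 2 ≤ K) (S : Finset (Fin K)) :
    0 ≤ lamStar p K S := by
  have := natCast_sub_one_add_pos hp0 (by omega : 1 ≤ K)
  have hpow : ∀ m : ℕ, 0 ≤ 1 - p ^ m := fun m => sub_nonneg.2 (pow_le_one₀ hp0.le hp1.le)
  have : 0 < 1 - p := sub_pos.2 hp1
  unfold lamStar
  refine add_nonneg ?_ (sum_nonneg fun n _ => ?_) <;> split_ifs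
  all_goals first | exact le_rfl | exact div_nonneg (hpow _) (by positivity)

lemma sum_lamStar (hp0 : 0 < p) (hp1 : p < 1) (hK : 2 ≤ K) :
    ∑ S ∈ displaySets K, lamStar p K S = 1 := by
  obtain ⟨k, rfl⟩ : ∃ k, K = k + 2 := ⟨K - 2, by omega⟩
  have hsum : ∑ n ∈ Icc 1 k, (1 - p ^ (k + 2 - n)) = k - p ^ 2 * ∑ n ∈ Icc 1 k, p ^ (k - n) := by
    rw [sum_sub_distrib, mul_sum, sum_const, Nat.card_Icc, nsmul_eq_mul, Nat.add_sub_cancel,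
      mul_one]
    refine congrArg _ (sum_congr rfl fun n hn => ?_)
    rw [← pow_add]
    congr 1
    have := (mem_Icc.1 hn).2
    omega
  have hgeom := one_sub_mul_sum_Icc_pow p k
  have := sum_lamStar_mul (p := p) (by omega : 2 ≤ k + 2) fun _ => 1
  simp only [mul_one, Nat.add_sub_cancel] at this
  rw [this, ← sum_div, hsum]
  have : (1 : ℝ) - p ≠ 0 := sub_ne_zero.2 hp1.ne'
  have := (natCast_sub_one_add_pos hp0 (by omega : 1 ≤ k + 2)).ne'
  field_simp
  push_cast
  linear_combination (-p ^ 2) * hgeom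

lemma sum_lamStar_mul_dS (hp0 : 0 < p) (hp1 : p < 1) (hK : 2 ≤ K) (σ : Equiv.Perm (Fin K)) :
    ∑ S ∈ displaySets K, lamStar p K S * dS p S σ
      = Real.log (1 / p) / ((K : ℝ) - 1 + p) * (tailInversionSum p K 0 σ
          + (1 - p) * ∑ n ∈ Icc 1 (K - 2), tailInversionSum p K n σ) := by
  have hpow : ∀ n ≤ K - 2, 1 - p ^ (K - n) ≠ 0 := fun n hn =>
    (sub_pos.2 (pow_lt_one₀ hp0.le hp1 (by omega))).ne'
  have := (natCast_sub_one_add_pos hp0 (by omega : 1 ≤ K)).ne'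
  have := (sub_pos.2 hp1).ne'
  rw [sum_lamStar_mul hK, mul_sum, mul_add (Real.log (1 / p) / _), mul_sum]
  simp only [dS_eq_inversionSum hp0 hp1.ne, card_tailSet, tailInversionSum]
  congr 1
  · have := hpow 0 (Nat.zero_le _)
    rw [Nat.sub_zero] at this ⊢
    field_simp
  · refine sum_congr rfl fun n hn => ?_
    have := hpow n (mem_Icc.1 hn).2
    field_simp

variable {a b : Fin K}

theorem sum_lamStar_mul_dS_swap (hp0 : 0 < p) (hp1 : p < 1) (hK : 2 ≤ K) (hab : a ⋖ b) :
    ∑ S ∈ displaySets K, lamStar p K S * dS p S (Equiv.swap a b)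
      = Real.log (1 / p) * (1 - p) / ((K : ℝ) - 1 + p) := by
  have hb := val_eq_of_covBy hab
  simp_rw [sum_lamStar_mul_dS hp0 hp1 hK, tailInversionSum_swap hab]
  rw [adjacentGap_add_sum_adjacentGap p (by omega)]
  ring

theorem le_sum_lamStar_mul_dS (hp0 : 0 < p) (hp1 : p < 1) (hK : 2 ≤ K)
    {σ : Equiv.Perm (Fin K)} (hσ : σ ≠ 1) :
    Real.log (1 / p) * (1 - p) / ((K : ℝ) - 1 + p)
      ≤ ∑ S ∈ displaySets K, lamStar p K S * dS p S σ := by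
  obtain ⟨a, b, hab, hba⟩ := exists_covBy_lt_of_ne_one hσ
  have hb := val_eq_of_covBy hab
  have := natCast_sub_one_add_pos hp0 (by omega : 1 ≤ K)
  have := Real.log_nonneg (one_le_one_div hp0 hp1.le)
  have : 0 ≤ 1 - p := by linarith
  have hgap := adjacentGap_le_tailInversionSum hp0.le hp1.le hab hba
  calc Real.log (1 / p) * (1 - p) / ((K : ℝ) - 1 + p)
      = Real.log (1 / p) / ((K : ℝ) - 1 + p) * (adjacentGap p a 0
          + (1 - p) * ∑ n ∈ Icc 1 (K - 2), adjacentGap p a n) := by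
        rw [adjacentGap_add_sum_adjacentGap p (by omega)]
        ring
    _ ≤ _ := by
        rw [sum_lamStar_mul_dS hp0 hp1 hK]
        gcongr with n
        exacts [hgap 0, hgap n]

end Allocation

section AdjacentSwaps

variable {k : ℕ} {p : ℝ}

lemma castSucc_covBy_succ (i : Fin (k + 1)) : i.castSucc ⋖ i.succ := by
  simp [Fin.covBy_iff]

lemma inversionSum_adjacent_swap (S : Finset (Fin (k + 2))) (i : Fin (k + 1)) :
    inversionSum S (Equiv.swap i.castSucc i.succ) (oaWeight p S)
      = if i.castSucc ∈ S ∧ i.succ ∈ S then (1 - p) * p ^ (rank S 1 i.castSucc - 1) else 0 := by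
  rw [inversionSum_swap_of_covBy (castSucc_covBy_succ i)]
  split_ifs with h
  · rw [oaWeight, oaWeight, rank_one_of_covBy h.2 (castSucc_covBy_succ i), Nat.add_sub_cancel,
      ← pow_sub_one_mul (Nat.one_le_iff_ne_zero.1 (one_le_rank h.1)) p]
    ring
  · rfl

lemma sum_pow_rank_castSucc_le (hp0 : 0 ≤ p) (S : Finset (Fin (k + 2))) :
    ∑ i ∈ univ.filter (fun i : Fin (k + 1) => i.castSucc ∈ S ∧ i.succ ∈ S),
        p ^ (rank S 1 i.castSucc - 1) ≤ ∑ t ∈ range (#S - 1), p ^ t := by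
  set A := univ.filter (fun i : Fin (k + 1) => i.castSucc ∈ S ∧ i.succ ∈ S)
  have hA : ∀ i ∈ A, i.castSucc ∈ S ∧ i.succ ∈ S := fun i hi => (mem_filter.1 hi).2
  have hinj : Set.InjOn (fun i : Fin (k + 1) => rank S 1 i.castSucc - 1) A := by
    refine StrictMonoOn.injOn fun i hi j hj hij => ?_
    have h1 : 1 ≤ rank S 1 i.castSucc := one_le_rank (hA i hi).1
    have h2 : rank S 1 i.castSucc < rank S 1 j.castSucc :=
      rank_lt_rank (hA j hj).1 (Fin.castSucc_lt_castSucc_iff.2 hij)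
    show rank S 1 i.castSucc - 1 < rank S 1 j.castSucc - 1
    omega
  rw [← sum_image hinj]
  refine sum_le_sum_of_subset_of_nonneg (fun t ht => ?_) fun _ _ _ => by positivity
  obtain ⟨i, hi, rfl⟩ := mem_image.1 ht
  have h1 : 1 ≤ rank S 1 i.castSucc := one_le_rank (hA i hi).1
  have h2 : rank S 1 i.castSucc < rank S 1 i.succ :=
    rank_lt_rank (hA i hi).2 (castSucc_covBy_succ i).lt
  have h3 : rank S 1 i.succ ≤ #S := rank_le_card
  rw [mem_range]
  omega

lemma mul_inversionSum_swap_last_le (hp0 : 0 ≤ p) (hp1 : p ≤ 1) (S : Finset (Fin (k + 2))) :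
    p * inversionSum S (Equiv.swap (Fin.last k).castSucc (Fin.last k).succ) (oaWeight p S)
      ≤ (1 - p) * p ^ (#S - 1) := by
  rw [inversionSum_adjacent_swap]
  split_ifs with h
  · have htop : rank S 1 (Fin.last k).succ = #S :=
      rank_one_eq_card fun x _ => by simpa [Fin.succ_last] using Fin.le_last x
    have hr := rank_one_of_covBy h.2 (castSucc_covBy_succ (Fin.last k))
    have h1 : 1 ≤ rank S 1 (Fin.last k).castSucc := one_le_rank h.1
    rw [show #S - 1 = rank S 1 (Fin.last k).castSucc - 1 + 1 by omega, pow_succ]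
    exact le_of_eq (by ring)
  · have : 0 ≤ 1 - p := by linarith
    rw [mul_zero]
    positivity

lemma sum_weighted_adjacent_swap_le (hp0 : 0 ≤ p) (hp1 : p ≤ 1) {S : Finset (Fin (k + 2))}
    (hS : S.Nonempty) :
    ∑ i : Fin (k + 1), (1 + if i = Fin.last k then p else 0)
        * inversionSum S (Equiv.swap i.castSucc i.succ) (oaWeight p S) ≤ 1 - p ^ #S := by
  have hsum : ∑ i : Fin (k + 1), inversionSum S (Equiv.swap i.castSucc i.succ) (oaWeight p S)
      ≤ 1 - p ^ (#S - 1) := by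
    simp only [inversionSum_adjacent_swap, ← sum_filter, ← mul_sum]
    rw [← mul_neg_geom_sum]
    exact mul_le_mul_of_nonneg_left (sum_pow_rank_castSucc_le hp0 S) (by linarith)
  have hlast := mul_inversionSum_swap_last_le hp0 hp1 S
  simp only [add_mul, one_mul, sum_add_distrib, ite_mul, zero_mul, sum_ite_eq', mem_univ, if_true]
  calc _ ≤ 1 - p ^ (#S - 1) + (1 - p) * p ^ (#S - 1) := add_le_add hsum hlast
    _ = 1 - p ^ #S := by
      rw [← pow_sub_one_mul (card_ne_zero.2 hS) p]
      ring

lemma sum_weighted_adjacent_swap_dS_le (hp0 : 0 < p) (hp1 : p < 1) {S : Finset (Fin (k + 2))}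
    (hS : S.Nonempty) :
    ∑ i : Fin (k + 1), (1 + if i = Fin.last k then p else 0) * dS p S (Equiv.swap i.castSucc i.succ)
      ≤ Real.log (1 / p) * (1 - p) := by
  have hm : 0 < 1 - p ^ #S := sub_pos.2 (pow_lt_one₀ hp0.le hp1 (card_ne_zero.2 hS))
  have := Real.log_nonneg (one_le_one_div hp0 hp1.le)
  have : 0 ≤ 1 - p := by linarith
  simp only [dS_eq_inversionSum hp0 hp1.ne, mul_left_comm _ (Real.log (1 / p) * _), ← mul_sum]
  calc _ ≤ Real.log (1 / p) * ((1 - p) / (1 - p ^ #S)) * (1 - p ^ #S) := by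
        gcongr
        exact sum_weighted_adjacent_swap_le hp0.le hp1.le hS
    _ = Real.log (1 / p) * (1 - p) := by field_simp

theorem exists_adjacent_swap_sum_mul_dS_le (hp0 : 0 < p) (hp1 : p < 1)
    (lam : Finset (Fin (k + 2)) → ℝ) (hnn : ∀ S : Finset (Fin (k + 2)), 2 ≤ #S → 0 ≤ lam S)
    (hsum : ∑ S ∈ displaySets (k + 2), lam S = 1) :
    ∃ i : Fin (k + 1), ∑ S ∈ displaySets (k + 2), lam S * dS p S (Equiv.swap i.castSucc i.succ)
        ≤ Real.log (1 / p) * (1 - p) / (((k + 2 : ℕ) : ℝ) - 1 + p) := by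
  set c := Real.log (1 / p) * (1 - p) / (((k + 2 : ℕ) : ℝ) - 1 + p)
  set w : Fin (k + 1) → ℝ := fun i => 1 + if i = Fin.last k then p else 0
  have hw : ∀ i, 0 < w i := fun i => by
    simp only [w]
    split_ifs <;> linarith
  have hsum_w : ∑ i, w i = ((k + 2 : ℕ) : ℝ) - 1 + p := by
    simp only [w, sum_add_distrib, sum_ite_eq', mem_univ, if_true, sum_const, card_univ,
      Fintype.card_fin, nsmul_eq_mul, mul_one]
    push_cast
    ring
  have hpos := natCast_sub_one_add_pos hp0 (by omega : 1 ≤ k + 2)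
  have hle : ∑ i, w i * ∑ S ∈ displaySets (k + 2), lam S * dS p S (Equiv.swap i.castSucc i.succ)
      ≤ ∑ i, w i * c :=
    calc _ = ∑ S ∈ displaySets (k + 2),
            lam S * ∑ i, w i * dS p S (Equiv.swap i.castSucc i.succ) := by
          simp only [mul_sum]
          rw [sum_comm]
          exact sum_congr rfl fun _ _ => sum_congr rfl fun _ _ => by ring
      _ ≤ ∑ S ∈ displaySets (k + 2), lam S * (Real.log (1 / p) * (1 - p)) := by
          refine sum_le_sum fun S hS => ?_
          have hS2 := (mem_filter.1 hS).2
          exact mul_le_mul_of_nonneg_left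
            (sum_weighted_adjacent_swap_dS_le hp0 hp1 (card_pos.1 (by omega))) (hnn S hS2)
      _ = ∑ i, w i * c := by
          rw [← sum_mul, hsum, one_mul, ← sum_mul, hsum_w, mul_div_cancel₀ _ hpos.ne']
  obtain ⟨i, -, hi⟩ := exists_le_of_sum_le univ_nonempty hle
  exact ⟨i, le_of_mul_le_mul_left hi (hw i)⟩

end AdjacentSwaps

end OrdinalAttraction

open OrdinalAttraction

/-- Proposition 3 (optimal allocation): the minimum over non-identity
permutations `σ` of `∑_{S ∈ 𝒮} λ*(S)·d_S(σ)` equals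
`log(1/p)·(1−p)/(K−1+p)`; in particular the nested allocation `λ*` attains the
supremum in the full-ranking max-min problem over OA alternatives. -/
theorem stmt11 (p : ℝ) (hp0 : 0 < p) (hp1 : p < 1) (K : ℕ) (hK : 2 ≤ K) :
    IsLeast { w : ℝ | ∃ σ : Equiv.Perm (Fin K), σ ≠ 1 ∧
        w = ∑ S ∈ Finset.univ.filter (fun S : Finset (Fin K) => 2 ≤ S.card),
              lamStar p K S * dS p S σ }
      (Real.log (1 / p) * (1 - p) / ((K : ℝ) - 1 + p))
    ∧ sInf { w : ℝ | ∃ σ : Equiv.Perm (Fin K), σ ≠ 1 ∧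
        w = ∑ S ∈ Finset.univ.filter (fun S : Finset (Fin K) => 2 ≤ S.card),
              lamStar p K S * dS p S σ }
      = sSup { v : ℝ | ∃ lam : Finset (Fin K) → ℝ,
          (∀ S : Finset (Fin K), 2 ≤ S.card → 0 ≤ lam S) ∧
          (∑ S ∈ Finset.univ.filter (fun S : Finset (Fin K) => 2 ≤ S.card), lam S) = 1 ∧
          v = sInf { w : ℝ | ∃ σ : Equiv.Perm (Fin K), σ ≠ 1 ∧
              w = ∑ S ∈ Finset.univ.filter (fun S : Finset (Fin K) => 2 ≤ S.card),
                    lam S * dS p S σ } } := by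
  obtain ⟨k, rfl⟩ : ∃ k, K = k + 2 := ⟨K - 2, by omega⟩
  simp only [← displaySets_eq]
  have hLeast : IsLeast { w : ℝ | ∃ σ : Equiv.Perm (Fin (k + 2)), σ ≠ 1 ∧
      w = ∑ S ∈ displaySets (k + 2), lamStar p (k + 2) S * dS p S σ }
      (Real.log (1 / p) * (1 - p) / (((k + 2 : ℕ) : ℝ) - 1 + p)) := by
    refine ⟨⟨_, swap_ne_one_of_covBy (castSucc_covBy_succ 0),
      (sum_lamStar_mul_dS_swap hp0 hp1 hK (castSucc_covBy_succ 0)).symm⟩, ?_⟩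
    rintro _ ⟨σ, hσ, rfl⟩
    exact le_sum_lamStar_mul_dS hp0 hp1 hK hσ
  refine ⟨hLeast, ?_⟩
  rw [hLeast.csInf_eq]
  refine (IsGreatest.csSup_eq ⟨?_, ?_⟩).symm
  · exact ⟨lamStar p (k + 2), fun S _ => lamStar_nonneg hp0 hp1 hK S, sum_lamStar hp0 hp1 hK,
      hLeast.csInf_eq.symm⟩
  rintro _ ⟨lam, hnn, hsum, rfl⟩
  obtain ⟨i, hi⟩ := exists_adjacent_swap_sum_mul_dS_le hp0 hp1 lam hnn hsum
  refine (csInf_le ⟨0, ?_⟩ ?_).trans hi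
  · rintro _ ⟨σ, -, rfl⟩
    exact sum_nonneg fun S hS => mul_nonneg (hnn S (mem_filter.1 hS).2) (dS_nonneg hp0 hp1 S σ)
  · exact ⟨_, swap_ne_one_of_covBy (castSucc_covBy_succ i), rfl⟩
end

section
/- Fix an integer K ≥ 2 and reals w(i,j) for distinct i, j ∈ {1,…,K} with w(i,j) ≥ w(j,i) whenever i < j. For a permutation σ of {1,…,K}, define cost_w(σ) = Σ over ordered pairs (i,j) with i ≠ j and σ(j) < σ(i) of w(i,j). Fix k ∈ {1,…,K−1}. Then the minimum of cost_w(σ) over permutations σ with σ(k+1) = 1 equals Σ over ordered pairs (i,j) with i > j of w(i,j) plus Σ_{i=1}^k (w(i,k+1) − w(k+1,i)). -/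
/-!
Group the cost by unordered pairs `j < i`: such a pair contributes `w i j` when `j` is ranked
ahead of `i` and `w j i` otherwise, and the hypothesis on `w` makes `w i j` the cheaper of the
two. When item `m` is ranked first, every pair `j < m` is forced to pay `w j m`, so the cost is at
least the sum of `w i j` over all pairs corrected on the pairs `j < m`. The cycle `(0 1 … m)`
ranks `m` first without changing the relative order of the other items, hence attains the bound.
-/

/-- `cost_w(σ) = ∑_{(i,j) : i ≠ j, σ(j) < σ(i)} w i j`, the (rescaled) negative
log-likelihood of the ranking `σ` under an Ordinal Attraction choice model,
where `σ i` is the position of item `i`. -/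
def cost {K : ℕ} (w : Fin K → Fin K → ℝ) (σ : Equiv.Perm (Fin K)) : ℝ :=
  ∑ q ∈ Finset.univ.filter (fun q : Fin K × Fin K => q.1 ≠ q.2 ∧ σ q.2 < σ q.1),
    w q.1 q.2

open Finset

variable {K : ℕ}

theorem Fin.coe_cycleRange (m i : Fin K) :
    (Fin.cycleRange m i : ℕ) =
      if (i : ℕ) < m then (i : ℕ) + 1 else if (i : ℕ) = m then 0 else i := by
  rcases lt_or_ge m i with h | h
  · rw [Fin.cycleRange_of_gt h, if_neg (Fin.lt_def.1 h).not_gt, if_neg (Fin.val_ne_of_ne h.ne')]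
  · rw [Fin.coe_cycleRange_of_le h]
    rcases h.lt_or_eq with h | rfl
    · simp [Fin.lt_def.1 h, h.ne]
    · simp

theorem Fin.cycleRange_lt_cycleRange_iff {m i j : Fin K} (hji : j < i) :
    Fin.cycleRange m j < Fin.cycleRange m i ↔ i ≠ m := by
  rw [Fin.lt_def, Fin.coe_cycleRange, Fin.coe_cycleRange, ← Fin.val_ne_iff]
  rw [Fin.lt_def] at hji
  split_ifs <;> omega

theorem cost_eq_sum_lt (w : Fin K → Fin K → ℝ) (σ : Equiv.Perm (Fin K)) :
    cost w σ = ∑ q ∈ univ.filter (fun q : Fin K × Fin K => q.2 < q.1),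
      if σ q.2 < σ q.1 then w q.1 q.2 else w q.2 q.1 := by
  have swapped : ∑ q ∈ univ.filter (fun q : Fin K × Fin K => q.2 < q.1 ∧ ¬σ q.2 < σ q.1),
        w q.2 q.1
      = ∑ q ∈ univ.filter (fun q : Fin K × Fin K => q.1 < q.2 ∧ σ q.2 < σ q.1), w q.1 q.2 := by
    refine sum_equiv (Equiv.prodComm _ _) (fun q => ?_) (fun _ _ => rfl)
    simp only [mem_filter, mem_univ, true_and, Equiv.prodComm_apply, Prod.fst_swap,
      Prod.snd_swap]
    constructor
    · rintro ⟨hlt, hσ⟩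
      exact ⟨hlt, lt_of_le_of_ne (not_lt.1 hσ) (σ.injective.ne hlt.ne')⟩
    · rintro ⟨hlt, hσ⟩
      exact ⟨hlt, hσ.not_gt⟩
  rw [sum_ite, filter_filter, filter_filter, swapped, ← sum_union, ← filter_or]
  · refine sum_congr (filter_congr fun q _ => ?_) fun _ _ => rfl
    rw [← or_and_right, or_comm, ← ne_iff_lt_or_gt]
  · exact disjoint_filter.2 fun q _ h h' => h.1.not_gt h'.1

theorem sum_lt_add_sum_lt_eq_sum_ite (w : Fin K → Fin K → ℝ) (m : Fin K) :
    (∑ q ∈ univ.filter (fun q : Fin K × Fin K => q.2 < q.1), w q.1 q.2)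
        + ∑ j ∈ univ.filter (· < m), (w j m - w m j)
      = ∑ q ∈ univ.filter (fun q : Fin K × Fin K => q.2 < q.1),
          if q.1 = m then w q.2 q.1 else w q.1 q.2 := by
  have row : ∑ j ∈ univ.filter (· < m), (w j m - w m j)
      = ∑ q ∈ univ.filter (fun q : Fin K × Fin K => q.2 < q.1),
          if q.1 = m then w q.2 q.1 - w q.1 q.2 else 0 := by
    rw [sum_filter, sum_filter, Fintype.sum_prod_type]
    simp only [← ite_and, and_comm]
    simp only [ite_and, sum_ite_irrel, sum_const_zero, sum_ite_eq', mem_univ, if_true]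
  rw [row, ← sum_add_distrib]
  exact sum_congr rfl fun q _ => by split_ifs <;> ring

theorem sum_lt_ite_le_cost (w : Fin K → Fin K → ℝ)
    (hw : ∀ i j : Fin K, i < j → w j i ≤ w i j)
    {σ : Equiv.Perm (Fin K)} {m : Fin K} (hσ : ∀ i, σ m ≤ σ i) :
    ∑ q ∈ univ.filter (fun q : Fin K × Fin K => q.2 < q.1),
        (if q.1 = m then w q.2 q.1 else w q.1 q.2) ≤ cost w σ := by
  rw [cost_eq_sum_lt]
  refine sum_le_sum fun q hq => ?_
  split_ifs with hm hσq hσq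
  · exact absurd (hσ q.2) (hm ▸ hσq).not_ge
  · exact le_rfl
  · exact le_rfl
  · exact hw q.2 q.1 (mem_filter.1 hq).2

theorem cost_cycleRange (w : Fin K → Fin K → ℝ) (m : Fin K) :
    cost w (Fin.cycleRange m) = ∑ q ∈ univ.filter (fun q : Fin K × Fin K => q.2 < q.1),
        (if q.1 = m then w q.2 q.1 else w q.1 q.2) := by
  rw [cost_eq_sum_lt]
  refine sum_congr rfl fun q hq => ?_
  simp only [Fin.cycleRange_lt_cycleRange_iff (mem_filter.1 hq).2, ite_not]

/-- Generalized likelihood for the hypothesis that (0-indexed) item `k` is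
top-ranked: the minimum of `cost_w(σ)` over rankings placing item `k` first
equals `∑_{i > j} w i j + ∑_{i < k} (w i k − w k i)`. -/
theorem stmt14 (K : ℕ) (w : Fin K → Fin K → ℝ)
    (hw : ∀ i j : Fin K, i < j → w j i ≤ w i j)
    (k : ℕ) (hk2 : k < K) :
    IsLeast { c : ℝ | ∃ σ : Equiv.Perm (Fin K),
        σ ⟨k, hk2⟩ = (⟨0, by omega⟩ : Fin K) ∧ c = cost w σ }
      ((∑ q ∈ Finset.univ.filter (fun q : Fin K × Fin K => q.2 < q.1), w q.1 q.2)
        + ∑ i ∈ Finset.univ.filter (fun i : Fin K => (i : ℕ) < k),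
            (w i ⟨k, hk2⟩ - w ⟨k, hk2⟩ i)) := by
  have target := sum_lt_add_sum_lt_eq_sum_ite w ⟨k, hk2⟩
  refine ⟨⟨Fin.cycleRange ⟨k, hk2⟩, ?_, target.trans (cost_cycleRange w _).symm⟩, ?_⟩
  · exact Fin.ext (by simp [Fin.coe_cycleRange])
  · rintro c ⟨σ, hσ, rfl⟩
    refine target.le.trans (sum_lt_ite_le_cost w hw fun i => ?_)
    rw [hσ, Fin.le_def]
    exact Nat.zero_le _
end

section
/- Fix an integer K ≥ 2 and reals w(i,j) for distinct i, j ∈ {1,…,K} with w(i,j) ≥ w(j,i) whenever i < j. For a permutation σ of {1,…,K}, define cost_w(σ) = Σ over ordered pairs (i,j) with i ≠ j and σ(j) < σ(i) of w(i,j). Fix n ∈ {1,…,K−1} and assume in addition that w(i,j) − w(j,i) ≥ w(n,n+1) − w(n+1,n) for all i, j with 1 ≤ i ≤ n < j ≤ K. Then the minimum of cost_w(σ), over permutations σ for which there exist i ≤ n < j with σ(j) < σ(i), equals Σ over ordered pairs (i,j) with i > j of w(i,j) plus (w(n,n+1) − w(n+1,n)). -/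
/-!
The identity ranking has cost `∑_{i > j} w i j`, and every other ranking `σ` pays, on top of
it, `w i j - w j i ≥ 0` for each pair `i < j` that it inverts. A ranking violating the
partition inverts some `i ≤ n < j`, so by the dominance hypothesis it pays at least
`w n (n+1) - w (n+1) n`; the adjacent transposition of `n` and `n + 1` inverts that pair only,
and attains the bound.
-/

open Finset Equiv

section Inversions

variable {K : ℕ}

def inversions (σ : Perm (Fin K)) : Finset (Fin K × Fin K) :=
  univ.filter fun q => q.2 < q.1 ∧ σ q.1 < σ q.2

@[simp]
lemma mem_inversions {σ : Perm (Fin K)} {q : Fin K × Fin K} :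
    q ∈ inversions σ ↔ q.2 < q.1 ∧ σ q.1 < σ q.2 := by
  simp [inversions]

lemma cost_eq_sum_add_sum_inversions (w : Fin K → Fin K → ℝ) (σ : Perm (Fin K)) :
    cost w σ = ∑ q ∈ univ.filter (fun q : Fin K × Fin K => q.2 < q.1), w q.1 q.2
      + ∑ q ∈ inversions σ, (w q.2 q.1 - w q.1 q.2) := by
  set ordered := univ.filter fun q : Fin K × Fin K => q.2 < q.1 ∧ σ q.2 < σ q.1
  have hcost : cost w σ = ∑ q ∈ ordered, w q.1 q.2 + ∑ q ∈ inversions σ, w q.2 q.1 := by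
    rw [cost, ← sum_filter_add_sum_filter_not _ (fun q : Fin K × Fin K => q.2 < q.1),
      filter_filter, filter_filter]
    congr 1
    · exact sum_congr (filter_congr fun q _ => by grind) fun _ _ => rfl
    · refine sum_nbij' Prod.swap Prod.swap ?_ ?_ (by simp) (by simp) (by simp) <;>
        simp only [mem_filter, mem_univ, true_and, mem_inversions, Prod.fst_swap,
          Prod.snd_swap] <;> grind
  have hlt : ∑ q ∈ univ.filter (fun q : Fin K × Fin K => q.2 < q.1), w q.1 q.2
      = ∑ q ∈ inversions σ, w q.1 q.2 + ∑ q ∈ ordered, w q.1 q.2 := by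
    rw [← sum_filter_add_sum_filter_not _ (fun q : Fin K × Fin K => σ q.1 < σ q.2),
      filter_filter, filter_filter]
    congr 2
    refine filter_congr fun q _ => and_congr_right fun h => ?_
    rw [not_lt, le_iff_lt_or_eq, or_iff_left (σ.injective.ne h.ne)]
  rw [hcost, hlt, sum_sub_distrib]
  ring

lemma inversions_swap {a b : Fin K} (hab : (b : ℕ) = a + 1) :
    inversions (swap a b) = {(b, a)} := by
  ext ⟨i, j⟩
  simp only [mem_inversions, mem_singleton, Prod.mk.injEq, swap_apply_def]
  constructor
  · rintro ⟨hji, hσ⟩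
    split_ifs at hσ <;> simp only [Fin.lt_def, Fin.ext_iff] at * <;> omega
  · rintro ⟨rfl, rfl⟩
    simp [Fin.lt_def, Fin.ext_iff, hab]

lemma cost_swap {a b : Fin K} (hab : (b : ℕ) = a + 1) (w : Fin K → Fin K → ℝ) :
    cost w (swap a b) = ∑ q ∈ univ.filter (fun q : Fin K × Fin K => q.2 < q.1), w q.1 q.2
      + (w a b - w b a) := by
  rw [cost_eq_sum_add_sum_inversions, inversions_swap hab, sum_singleton]

lemma le_cost_of_lt {w : Fin K → Fin K → ℝ} (hw : ∀ i j : Fin K, i < j → w j i ≤ w i j)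
    {σ : Perm (Fin K)} {i j : Fin K} (hij : i < j) (hσ : σ j < σ i) :
    ∑ q ∈ univ.filter (fun q : Fin K × Fin K => q.2 < q.1), w q.1 q.2 + (w i j - w j i)
      ≤ cost w σ := by
  rw [cost_eq_sum_add_sum_inversions]
  gcongr
  have hji : (j, i) ∈ inversions σ := mem_inversions.2 ⟨hij, hσ⟩
  refine single_le_sum (f := fun q : Fin K × Fin K => w q.2 q.1 - w q.1 q.2) (fun q hq => ?_) hji
  linarith [hw q.2 q.1 (mem_inversions.1 hq).1]

end Inversions

/-- Generalized likelihood ratio for the partition criterion: with items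
0-indexed and the partition placing items `{0,…,n−1}` above `{n,…,K−1}`, and
assuming `w i j − w j i ≥ w (n−1) n − w n (n−1)` for all `i < n ≤ j`, the
minimum of `cost_w(σ)` over rankings violating the partition equals
`∑_{i > j} w i j + (w (n−1) n − w n (n−1))`. -/
theorem stmt15 (K : ℕ) (w : Fin K → Fin K → ℝ)
    (hw : ∀ i j : Fin K, i < j → w j i ≤ w i j)
    (n : ℕ) (hn1 : 1 ≤ n) (hn2 : n < K)
    (hdom : ∀ i j : Fin K, (i : ℕ) < n → n ≤ (j : ℕ) →
      w (⟨n - 1, by omega⟩ : Fin K) ⟨n, hn2⟩ - w ⟨n, hn2⟩ (⟨n - 1, by omega⟩ : Fin K)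
        ≤ w i j - w j i) :
    IsLeast { c : ℝ | ∃ σ : Equiv.Perm (Fin K),
        (∃ i j : Fin K, (i : ℕ) < n ∧ n ≤ (j : ℕ) ∧ σ j < σ i) ∧ c = cost w σ }
      ((∑ q ∈ Finset.univ.filter (fun q : Fin K × Fin K => q.2 < q.1), w q.1 q.2)
        + (w (⟨n - 1, by omega⟩ : Fin K) ⟨n, hn2⟩
            - w ⟨n, hn2⟩ (⟨n - 1, by omega⟩ : Fin K))) := by
  set a : Fin K := ⟨n - 1, by omega⟩
  set b : Fin K := ⟨n, hn2⟩
  have hab : (b : ℕ) = a + 1 := by simp [a, b]; omega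
  constructor
  · refine ⟨swap a b, ⟨a, b, by simp [a]; omega, le_rfl, ?_⟩, (cost_swap hab w).symm⟩
    simp [Fin.lt_def, hab]
  · rintro c ⟨σ, ⟨i, j, hi, hj, hσ⟩, rfl⟩
    have hij : i < j := by rw [Fin.lt_def]; omega
    linarith [hdom i j hi hj, le_cost_of_lt hw hij hσ]
end

section
/- Fix an integer K ≥ 2 and a real p ∈ (0,1). Let reals g(j,k) for 1 ≤ j ≤ k ≤ K satisfy, for every k ∈ {2,…,K}: g(j,k) > 0 for all j ∈ {1,…,k}, Σ_{j=1}^k g(j,k) = 1, and g(j+1,k) ≤ p·g(j,k) for all j ∈ {1,…,k−1}. Define D(1) = 1/(1 − K·g(K,K)) and, recursively for r = 2,…,K−1, D(r) = (K−r+1)·[Σ_{i=1}^{r−1} (g(K−r+1, K−i+1) − g(K−r+2, K−i+1))·D(i)] / (1 − (K−r+1)·g(K−r+1, K−r+1)). Then D(1) ≤ (1−p^K)/((K−1)·p^K − K·p^{K−1} + 1), and for every r ∈ {2,…,K−1}: D(r) + Σ_{i=1}^{r−1} ((1−p^{K−r+1})/(1−p^{K−i+1}))·D(i) ≤ (1−p^{K−r+1})/((K−r)·p^{K−r+1}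 − (K−r+1)·p^{K−r} + 1). -/
open Finset

private def Fq (p : ℝ) (m : ℕ) : ℝ :=
  ((m - 1 : ℕ) : ℝ) * p ^ m - (m : ℝ) * p ^ (m - 1) + 1

private lemma geom_aux (p : ℝ) (n : ℕ) :
    (1 - p) * ∑ i ∈ range n, p ^ i = 1 - p ^ n := by
  linear_combination -geom_sum_mul p n

private lemma Fq_pos {p : ℝ} (hp0 : 0 < p) (hp1 : p < 1) :
    ∀ m, 2 ≤ m → 0 < Fq p m := by
  intro m hm
  induction m, hm using Nat.le_induction with
  | base =>
    have h : (0 : ℝ) < 1 - p := by linarith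
    simp only [Fq]
    norm_num
    nlinarith [mul_pos h h]
  | succ n hn ih =>
    obtain ⟨j, rfl⟩ : ∃ j, n = j + 2 := ⟨n - 2, by omega⟩
    have e1 : j + 2 + 1 - 1 = j + 2 := by omega
    have e2 : j + 2 - 1 = j + 1 := by omega
    have hstep : Fq p (j + 2 + 1) =
        Fq p (j + 2) + ((j : ℝ) + 2) * p ^ (j + 1) * (1 - p) ^ 2 := by
      simp only [Fq, e1, e2]
      push_cast
      ring
    have h2 : (0 : ℝ) ≤ ((j : ℝ) + 2) * p ^ (j + 1) * (1 - p) ^ 2 := by positivity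
    linarith

private lemma Fq_le {p : ℝ} (hp0 : 0 < p) (hp1 : p < 1) {m k : ℕ}
    (hm : 2 ≤ m) (hmk : m ≤ k) : Fq p m ≤ 1 - p ^ k := by
  obtain ⟨j, rfl⟩ : ∃ j, m = j + 2 := ⟨m - 2, by omega⟩
  have h1 : p ^ k ≤ p ^ (j + 2) := pow_le_pow_of_le_one hp0.le hp1.le hmk
  have h2 : (0 : ℝ) < p ^ (j + 1) := pow_pos hp0 _
  have e2 : j + 2 - 1 = j + 1 := by omega
  simp only [Fq, e2]
  push_cast
  have h3 : (0:ℝ) ≤ ((j:ℝ) + 2) * p ^ (j + 1) * (1 - p) :=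
    mul_nonneg (by positivity) (by linarith)
  nlinarith [h1, h2, pow_succ p (j + 1), h3]

private lemma keyreal (p q e t τ M : ℝ)
    (hX : t * (1 - q * p) ≤ q * (1 - p) * (1 - τ))
    (hY : τ * ((1 - p) * q) ≤ t * (q * p - e))
    (hqp : 0 < q * (1 - p))
    (hFpos : 0 < 1 - M * q + (M - 1) * (q * p))
    (hc1 : 1 - M * q + (M - 1) * (q * p) ≤ 1 - e) :
    1 - M * q + (M - 1) * (q * p) ≤ (1 - (M * t + τ)) * (1 - e) := by
  have hA : 0 ≤ (1 - e - (1 - M * q + (M - 1) * (q * p))) *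
      (q * (1 - p) * (1 - τ) - t * (1 - q * p)) :=
    mul_nonneg (by linarith) (by linarith)
  have hB : 0 ≤ (1 - M * q + (M - 1) * (q * p)) *
      (t * (q * p - e) - τ * ((1 - p) * q)) :=
    mul_nonneg hFpos.le (by linarith)
  have cert : q * (1 - p) *
      ((1 - (M * t + τ)) * (1 - e) - (1 - M * q + (M - 1) * (q * p)))
      = (1 - e - (1 - M * q + (M - 1) * (q * p))) *
          (q * (1 - p) * (1 - τ) - t * (1 - q * p))
        + (1 - M * q + (M - 1) * (q * p)) *
          (t * (q * p - e) - τ * ((1 - p) * q)) := by ring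
  nlinarith [hA, hB, cert, hqp]
/-- Stage-wise bounds on the Nested Elimination duration quantities `D(r)`
over the `p`-separable family (the intermediate inequalities behind the
worst-case bound on `∑_r D(r)`). -/
theorem stmt16 (K : ℕ) (hK : 2 ≤ K) (p : ℝ) (hp0 : 0 < p) (hp1 : p < 1)
    (g : ℕ → ℕ → ℝ) (D : ℕ → ℝ)
    (hpos : ∀ k ∈ Finset.Icc 2 K, ∀ j ∈ Finset.Icc 1 k, 0 < g j k)
    (hsum : ∀ k ∈ Finset.Icc 2 K, ∑ j ∈ Finset.Icc 1 k, g j k = 1)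
    (hsep : ∀ k ∈ Finset.Icc 2 K, ∀ j ∈ Finset.Icc 1 (k - 1), g (j + 1) k ≤ p * g j k)
    (hD1 : D 1 = 1 / (1 - (K : ℝ) * g K K))
    (hDr : ∀ r ∈ Finset.Icc 2 (K - 1),
      D r = ((K - r + 1 : ℕ) : ℝ) *
        (∑ i ∈ Finset.Icc 1 (r - 1),
          (g (K - r + 1) (K - i + 1) - g (K - r + 2) (K - i + 1)) * D i)
        / (1 - ((K - r + 1 : ℕ) : ℝ) * g (K - r + 1) (K - r + 1))) :
    D 1 ≤ (1 - p ^ K)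
        / (((K - 1 : ℕ) : ℝ) * p ^ K - (K : ℝ) * p ^ (K - 1) + 1)
    ∧ ∀ r ∈ Finset.Icc 2 (K - 1),
        D r + ∑ i ∈ Finset.Icc 1 (r - 1),
            ((1 - p ^ (K - r + 1)) / (1 - p ^ (K - i + 1))) * D i
          ≤ (1 - p ^ (K - r + 1))
            / (((K - r : ℕ) : ℝ) * p ^ (K - r + 1)
                - ((K - r + 1 : ℕ) : ℝ) * p ^ (K - r) + 1) := by
  have h1p : (0 : ℝ) < 1 - p := by linarith
  have hpow_pos : ∀ n : ℕ, (0 : ℝ) < p ^ n := fun n => pow_pos hp0 n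
  have hpow_lt1 : ∀ n : ℕ, 1 ≤ n → p ^ n < 1 := fun n hn =>
    pow_lt_one₀ hp0.le hp1 (by omega)
  -- chain inequality
  have chain : ∀ k, 2 ≤ k → k ≤ K → ∀ j, 1 ≤ j → ∀ l, j ≤ l → l ≤ k →
      g l k ≤ p ^ (l - j) * g j k := by
    intro k hk2 hkK j hj l hjl hlk
    induction l, hjl using Nat.le_induction with
    | base => simp
    | succ l hl ih =>
      have h1 : g (l + 1) k ≤ p * g l k :=
        hsep k (Finset.mem_Icc.mpr ⟨hk2, hkK⟩) l (Finset.mem_Icc.mpr ⟨by omega, by omega⟩)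
      have h2 := ih (by omega)
      have e1 : l + 1 - j = (l - j) + 1 := by omega
      rw [e1, pow_succ]
      calc g (l + 1) k ≤ p * g l k := h1
        _ ≤ p * (p ^ (l - j) * g j k) := mul_le_mul_of_nonneg_left h2 hp0.le
        _ = p ^ (l - j) * p * g j k := by ring
  -- the key per-display-set bound
  have key : ∀ m k, 2 ≤ m → m ≤ k → k ≤ K →
      Fq p m ≤ (1 - ((m : ℝ) * g m k + ∑ j ∈ Finset.Icc (m + 1) k, g j k)) * (1 - p ^ k) := by
    intro m k hm2 hmk hkK
    have hk2 : 2 ≤ k := le_trans hm2 hmk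
    have hkmem : k ∈ Finset.Icc 2 K := Finset.mem_Icc.mpr ⟨hk2, hkK⟩
    -- H + τ = 1
    have hsplit : (∑ j ∈ Finset.Icc 1 m, g j k) + (∑ j ∈ Finset.Icc (m + 1) k, g j k) = 1 := by
      have e1 : Finset.Icc 1 m = Finset.Ioc 0 m := by
        ext x; simp only [Finset.mem_Icc, Finset.mem_Ioc]; omega
      have e2 : Finset.Icc (m + 1) k = Finset.Ioc m k := by
        ext x; simp only [Finset.mem_Icc, Finset.mem_Ioc]; omega
      have e3 : Finset.Icc 1 k = Finset.Ioc 0 k := by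
        ext x; simp only [Finset.mem_Icc, Finset.mem_Ioc]; omega
      rw [e1, e2, Finset.sum_Ioc_consecutive _ (Nat.zero_le m) hmk, ← e3]
      exact hsum k hkmem
    -- head inequality
    have hhead : g m k * (1 - p ^ m) ≤ p ^ (m - 1) * (1 - p) * ∑ j ∈ Finset.Icc 1 m, g j k := by
      have hstep : ∀ j ∈ Finset.Icc 1 m, p ^ (j - 1) * g m k ≤ p ^ (m - 1) * g j k := by
        intro j hj
        rw [Finset.mem_Icc] at hj
        have hc := chain k hk2 hkK j hj.1 m hj.2 hmk
        calc p ^ (j - 1) * g m k ≤ p ^ (j - 1) * (p ^ (m - j) * g j k) :=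
              mul_le_mul_of_nonneg_left hc (pow_nonneg hp0.le _)
          _ = p ^ (m - 1) * g j k := by
              rw [← mul_assoc, ← pow_add]
              congr 2
              omega
      have hsum1 : ∑ j ∈ Finset.Icc 1 m, p ^ (j - 1) * g m k
          ≤ ∑ j ∈ Finset.Icc 1 m, p ^ (m - 1) * g j k := Finset.sum_le_sum hstep
      have hL : ∑ j ∈ Finset.Icc 1 m, p ^ (j - 1) * g m k
          = (∑ i ∈ Finset.range m, p ^ i) * g m k := by
        have e1 : Finset.Icc 1 m = Finset.Ico 1 (m + 1) := by
          ext x; simp only [Finset.mem_Icc, Finset.mem_Ico]; omega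
        rw [e1, Finset.sum_Ico_eq_sum_range]
        have e2 : m + 1 - 1 = m := by omega
        rw [e2, Finset.sum_mul]
        apply Finset.sum_congr rfl
        intro i _
        have e3 : 1 + i - 1 = i := by omega
        rw [e3]
      have hR : ∑ j ∈ Finset.Icc 1 m, p ^ (m - 1) * g j k
          = p ^ (m - 1) * ∑ j ∈ Finset.Icc 1 m, g j k := by rw [Finset.mul_sum]
      rw [hL, hR] at hsum1
      have := mul_le_mul_of_nonneg_left hsum1 h1p.le
      calc g m k * (1 - p ^ m)
          = (1 - p) * ((∑ i ∈ Finset.range m, p ^ i) * g m k) := by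
            rw [← geom_aux p m]; ring
        _ ≤ (1 - p) * (p ^ (m - 1) * ∑ j ∈ Finset.Icc 1 m, g j k) := this
        _ = p ^ (m - 1) * (1 - p) * ∑ j ∈ Finset.Icc 1 m, g j k := by ring
    -- tail inequality
    have htail : (∑ j ∈ Finset.Icc (m + 1) k, g j k) * ((1 - p) * p ^ (m - 1))
        ≤ g m k * (p ^ m - p ^ k) := by
      have hstep : ∀ j ∈ Finset.Icc (m + 1) k, g j k ≤ p ^ (j - m) * g m k := by
        intro j hj
        rw [Finset.mem_Icc] at hj
        exact chain k hk2 hkK m (by omega) j (by omega) hj.2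
      have h1 : (∑ j ∈ Finset.Icc (m + 1) k, g j k)
          ≤ ∑ j ∈ Finset.Icc (m + 1) k, p ^ (j - m) * g m k := Finset.sum_le_sum hstep
      have h2 : ∑ j ∈ Finset.Icc (m + 1) k, p ^ (j - m) * g m k
          = ((∑ i ∈ Finset.range (k - m), p ^ i) * p) * g m k := by
        have e1 : Finset.Icc (m + 1) k = Finset.Ico (m + 1) (k + 1) := by
          ext x; simp only [Finset.mem_Icc, Finset.mem_Ico]; omega
        rw [e1, Finset.sum_Ico_eq_sum_range]
        have e2 : k + 1 - (m + 1) = k - m := by omega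
        rw [e2, Finset.sum_mul, Finset.sum_mul]
        apply Finset.sum_congr rfl
        intro i _
        have e3 : m + 1 + i - m = i + 1 := by omega
        rw [e3, pow_succ]
      have h3 : (∑ j ∈ Finset.Icc (m + 1) k, g j k) * ((1 - p) * p ^ (m - 1))
          ≤ (((∑ i ∈ Finset.range (k - m), p ^ i) * p) * g m k) * ((1 - p) * p ^ (m - 1)) := by
        apply mul_le_mul_of_nonneg_right (le_trans h1 (le_of_eq h2))
        positivity
      refine h3.trans (le_of_eq ?_)
      have e4 : p ^ (m - 1) * p = p ^ m := by
        rw [← pow_succ]; congr 1; omega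
      have e5 : p ^ m * p ^ (k - m) = p ^ k := by
        rw [← pow_add]; congr 1; omega
      have := geom_aux p (k - m)
      calc (((∑ i ∈ Finset.range (k - m), p ^ i) * p) * g m k) * ((1 - p) * p ^ (m - 1))
          = ((1 - p) * ∑ i ∈ Finset.range (k - m), p ^ i) * (p ^ (m - 1) * p) * g m k := by
            ring
        _ = (1 - p ^ (k - m)) * p ^ m * g m k := by rw [this, e4]
        _ = g m k * (p ^ m - p ^ m * p ^ (k - m)) := by ring
        _ = g m k * (p ^ m - p ^ k) := by rw [e5]
    -- assemble via keyreal
    have e4 : p ^ (m - 1) * p = p ^ m := by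
      rw [← pow_succ]; congr 1; omega
    have hcast : ((m - 1 : ℕ) : ℝ) = (m : ℝ) - 1 := by
      rw [Nat.cast_sub (by omega)]; norm_num
    have hFq_eq : Fq p m = 1 - (m : ℝ) * p ^ (m - 1) + ((m : ℝ) - 1) * (p ^ (m - 1) * p) := by
      rw [Fq, hcast, e4]; ring
    have hHτ : (∑ j ∈ Finset.Icc 1 m, g j k) = 1 - ∑ j ∈ Finset.Icc (m + 1) k, g j k := by
      linarith
    have hX : g m k * (1 - p ^ (m - 1) * p)
        ≤ p ^ (m - 1) * (1 - p) * (1 - ∑ j ∈ Finset.Icc (m + 1) k, g j k) := by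
      rw [e4, ← hHτ]; exact hhead
    have hY : (∑ j ∈ Finset.Icc (m + 1) k, g j k) * ((1 - p) * p ^ (m - 1))
        ≤ g m k * (p ^ (m - 1) * p - p ^ k) := by
      rw [e4]; exact htail
    have hqp : (0 : ℝ) < p ^ (m - 1) * (1 - p) := by positivity
    have hFpos := Fq_pos hp0 hp1 m hm2
    have hFe := Fq_le hp0 hp1 hm2 hmk
    rw [hFq_eq] at hFpos hFe ⊢
    exact keyreal p (p ^ (m - 1)) (p ^ k) (g m k) (∑ j ∈ Finset.Icc (m + 1) k, g j k)
      (m : ℝ) hX hY hqp hFpos hFe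
  -- positivity of denominators
  have den_pos : ∀ m, 2 ≤ m → m ≤ K → (0 : ℝ) < 1 - (m : ℝ) * g m m := by
    intro m hm2 hmK
    have hk := key m m hm2 le_rfl hmK
    have hFpos := Fq_pos hp0 hp1 m hm2
    rw [Finset.Icc_eq_empty (by omega), Finset.sum_empty, add_zero] at hk
    have h1 : (0 : ℝ) < 1 - p ^ m := by
      have := hpow_lt1 m (by omega); linarith
    nlinarith [hk, hFpos, h1]
  -- nonnegativity of the D's
  have Dnn : ∀ i, 1 ≤ i → i ≤ K - 1 → 0 ≤ D i := by
    intro i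
    induction i using Nat.strong_induction_on with
    | _ i ih =>
      intro hi1 hiK
      rcases eq_or_lt_of_le hi1 with h1 | h2
      · rw [← h1, hD1]
        exact (div_pos one_pos (den_pos K hK le_rfl)).le
      · rw [hDr i (Finset.mem_Icc.mpr ⟨h2, hiK⟩)]
        apply div_nonneg _ (den_pos (K - i + 1) (by omega) (by omega)).le
        apply mul_nonneg (Nat.cast_nonneg _)
        apply Finset.sum_nonneg
        intro x hx
        rw [Finset.mem_Icc] at hx
        apply mul_nonneg _ (ih x (by omega) (by omega) (by omega))
        have hkm : (K - x + 1) ∈ Finset.Icc 2 K := Finset.mem_Icc.mpr ⟨by omega, by omega⟩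
        have hg1 : 0 < g (K - i + 1) (K - x + 1) :=
          hpos _ hkm _ (Finset.mem_Icc.mpr ⟨by omega, by omega⟩)
        have hg2 := hsep _ hkm (K - i + 1) (Finset.mem_Icc.mpr ⟨by omega, by omega⟩)
        have e1 : K - i + 1 + 1 = K - i + 2 := by omega
        rw [e1] at hg2
        nlinarith [hg1, hg2]
  -- the telescoping identity
  have iden : ∀ r, 1 ≤ r → r ≤ K - 1 →
      ∑ i ∈ Finset.Icc 1 r,
        (1 - (((K - r + 1 : ℕ) : ℝ) * g (K - r + 1) (K - i + 1)
          + ∑ j ∈ Finset.Icc (K - r + 2) (K - i + 1), g j (K - i + 1))) * D i = 1 := by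
    intro r hr1
    induction r, hr1 using Nat.le_induction with
    | base =>
      intro _
      rw [Finset.Icc_self, Finset.sum_singleton]
      have e1 : K - 1 + 1 = K := by omega
      rw [e1, Finset.Icc_eq_empty (by omega), Finset.sum_empty, add_zero, hD1]
      have hd := den_pos K hK le_rfl
      field_simp
    | succ r hr ih =>
      intro hrK
      have IH := ih (by omega)
      rw [Finset.sum_Icc_succ_top (by omega : 1 ≤ r + 1)]
      have ea : K - (r + 1) + 1 = K - r := by omega
      have eb : K - (r + 1) + 2 = K - r + 1 := by omega
      rw [ea, eb]
      -- the top term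
      have etop : Finset.Icc (K - r + 1) (K - r) = (∅ : Finset ℕ) :=
        Finset.Icc_eq_empty (by omega)
      rw [etop, Finset.sum_empty, add_zero]
      -- recursion for D (r+1)
      have hden := den_pos (K - r) (by omega) (by omega)
      have hval := hDr (r + 1) (Finset.mem_Icc.mpr ⟨by omega, by omega⟩)
      rw [ea, eb] at hval
      have er : r + 1 - 1 = r := by omega
      rw [er] at hval
      have hDmul : (1 - ((K - r : ℕ) : ℝ) * g (K - r) (K - r)) * D (r + 1)
          = ((K - r : ℕ) : ℝ) *
            ∑ i ∈ Finset.Icc 1 r, (g (K - r) (K - i + 1) - g (K - r + 1) (K - i + 1)) * D i := by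
        rw [hval]; field_simp
      -- per-term rewrite of the new coefficients
      have hper : ∀ i ∈ Finset.Icc 1 r,
          (1 - (((K - r : ℕ) : ℝ) * g (K - r) (K - i + 1)
            + ∑ j ∈ Finset.Icc (K - r + 1) (K - i + 1), g j (K - i + 1))) * D i
          = (1 - (((K - r + 1 : ℕ) : ℝ) * g (K - r + 1) (K - i + 1)
            + ∑ j ∈ Finset.Icc (K - r + 2) (K - i + 1), g j (K - i + 1))) * D i
            - ((K - r : ℕ) : ℝ) * ((g (K - r) (K - i + 1) - g (K - r + 1) (K - i + 1)) * D i) := by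
        intro i hi
        rw [Finset.mem_Icc] at hi
        have hbot : ∑ j ∈ Finset.Icc (K - r + 1) (K - i + 1), g j (K - i + 1)
            = g (K - r + 1) (K - i + 1)
              + ∑ j ∈ Finset.Icc (K - r + 2) (K - i + 1), g j (K - i + 1) := by
          have e2 : Finset.Icc (K - r + 2) (K - i + 1) = Finset.Ioc (K - r + 1) (K - i + 1) := by
            ext x; simp only [Finset.mem_Icc, Finset.mem_Ioc]; omega
          have e3 : Finset.Icc (K - r + 1) (K - i + 1)
              = insert (K - r + 1) (Finset.Ioc (K - r + 1) (K - i + 1)) := by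
            ext x; simp only [Finset.mem_Icc, Finset.mem_Ioc, Finset.mem_insert]; omega
          rw [e2, e3, Finset.sum_insert (by simp)]
        rw [hbot]
        have hc : ((K - r + 1 : ℕ) : ℝ) = ((K - r : ℕ) : ℝ) + 1 := by push_cast; ring
        rw [hc]; ring
      rw [Finset.sum_congr rfl hper, Finset.sum_sub_distrib, IH, ← Finset.mul_sum]
      linarith [hDmul]
  constructor
  · -- the bound on D 1
    have hkey := key K K hK le_rfl le_rfl
    rw [Finset.Icc_eq_empty (by omega), Finset.sum_empty, add_zero] at hkey
    have hden := den_pos K hK le_rfl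
    have hFpos := Fq_pos hp0 hp1 K hK
    rw [hD1, show ((K - 1 : ℕ) : ℝ) * p ^ K - (K : ℝ) * p ^ (K - 1) + 1 = Fq p K from rfl]
    rw [div_le_div_iff₀ hden hFpos]
    nlinarith [hkey]
  · intro r hr
    rw [Finset.mem_Icc] at hr
    obtain ⟨hr2, hrK⟩ := hr
    have hm2 : 2 ≤ K - r + 1 := by omega
    have hFpos := Fq_pos hp0 hp1 (K - r + 1) hm2
    have hiden := iden r (by omega) hrK
    have hm1 : (0 : ℝ) < 1 - p ^ (K - r + 1) := by
      have := hpow_lt1 (K - r + 1) (by omega); linarith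
    -- pointwise coefficient bound
    have hw : ∀ i ∈ Finset.Icc 1 r,
        Fq p (K - r + 1) * (D i / (1 - p ^ (K - i + 1)))
          ≤ (1 - (((K - r + 1 : ℕ) : ℝ) * g (K - r + 1) (K - i + 1)
            + ∑ j ∈ Finset.Icc (K - r + 2) (K - i + 1), g j (K - i + 1))) * D i := by
      intro i hi
      rw [Finset.mem_Icc] at hi
      have hik : (0 : ℝ) < 1 - p ^ (K - i + 1) := by
        have := hpow_lt1 (K - i + 1) (by omega); linarith
      have hkk := key (K - r + 1) (K - i + 1) hm2 (by omega) (by omega)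
      have e1 : K - r + 1 + 1 = K - r + 2 := by omega
      rw [e1] at hkk
      have hDi := Dnn i (by omega) (by omega)
      have h2 : Fq p (K - r + 1) / (1 - p ^ (K - i + 1))
          ≤ 1 - (((K - r + 1 : ℕ) : ℝ) * g (K - r + 1) (K - i + 1)
            + ∑ j ∈ Finset.Icc (K - r + 2) (K - i + 1), g j (K - i + 1)) :=
        (div_le_iff₀ hik).mpr hkk
      calc Fq p (K - r + 1) * (D i / (1 - p ^ (K - i + 1)))
          = (Fq p (K - r + 1) / (1 - p ^ (K - i + 1))) * D i := by ring
        _ ≤ _ := mul_le_mul_of_nonneg_right h2 hDi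
    have hsum2 : Fq p (K - r + 1) * ∑ i ∈ Finset.Icc 1 r, D i / (1 - p ^ (K - i + 1)) ≤ 1 := by
      rw [Finset.mul_sum]
      exact le_of_le_of_eq (Finset.sum_le_sum hw) hiden
    have hTle : (∑ i ∈ Finset.Icc 1 r, D i / (1 - p ^ (K - i + 1)))
        ≤ 1 / Fq p (K - r + 1) := by
      rw [le_div_iff₀ hFpos, mul_comm]
      exact hsum2
    have hTsplit := Finset.sum_Icc_succ_top (a := 1) (b := r - 1)
      (by omega) (fun i => D i / (1 - p ^ (K - i + 1)))
    have er : r - 1 + 1 = r := by omega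
    rw [er] at hTsplit
    have hmain := mul_le_mul_of_nonneg_left hTle hm1.le
    rw [hTsplit] at hmain
    have e2 : (1 - p ^ (K - r + 1)) *
        ((∑ i ∈ Finset.Icc 1 (r - 1), D i / (1 - p ^ (K - i + 1)))
          + D r / (1 - p ^ (K - r + 1)))
        = (∑ i ∈ Finset.Icc 1 (r - 1),
            ((1 - p ^ (K - r + 1)) / (1 - p ^ (K - i + 1))) * D i) + D r := by
      rw [mul_add, Finset.mul_sum]
      congr 1
      · apply Finset.sum_congr rfl; intro i _; ring
      · field_simp
    rw [e2] at hmain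
    have eden : ((K - r : ℕ) : ℝ) * p ^ (K - r + 1) - ((K - r + 1 : ℕ) : ℝ) * p ^ (K - r) + 1
        = Fq p (K - r + 1) := by
      simp [Fq, Nat.add_sub_cancel]
    rw [eden]
    have e3 : (1 - p ^ (K - r + 1)) * (1 / Fq p (K - r + 1))
        = (1 - p ^ (K - r + 1)) / Fq p (K - r + 1) := by ring
    rw [e3] at hmain
    linarith [hmain]
end
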